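/- arXiv:2409.12132 — 6 statements merged into one kernel-verified Lean document; each statement's English description precedes it below -/
import Mathlib

section
/- Let α₁,…,αₙ ∈ ℕⁿ be linearly independent (as vectors in ℝⁿ). Then the map F : (ℂ*)ⁿ → (ℂ*)ⁿ defined by F(z) = (z^{α₁}, …, z^{αₙ}) (where z^α = z₁^{α_1}⋯zₙ^{α_n}) is proper, i.e., the preimage of every compact subset of (ℂ*)ⁿ is compact. -/
/-!
Taking `log ‖·‖` coordinatewise turns the monomial map into the linear map of the exponent
matrix `A`, which is invertible. Hence on the preimage of a compact `K ⊆ (𝕜*)ⁿ` the vector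
`(log ‖zᵢ‖)ᵢ = A⁻¹ (log ‖wⱼ‖)ⱼ`, `w ∈ K`, stays bounded: the preimage lies in a compact product
of closed annuli, in which it is closed.
-/

open Set Matrix

namespace MonomialMap

variable {ι 𝕜 : Type*} [NormedField 𝕜]

noncomputable def logNorm (z : ι → 𝕜) : ι → ℝ :=
  fun i => Real.log ‖z i‖

theorem continuousOn_logNorm :
    ContinuousOn (logNorm : (ι → 𝕜) → ι → ℝ) {z | ∀ i, z i ≠ 0} :=
  continuousOn_pi.mpr fun i =>
    (continuous_apply i).norm.continuousOn.log fun _ hz => norm_ne_zero_iff.mpr (hz i)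

theorem isCompact_setOf_norm_mem_Icc [ProperSpace 𝕜] (r R : ℝ) :
    IsCompact {z : ι → 𝕜 | ∀ i, ‖z i‖ ∈ Icc r R} := by
  have hannulus : {w : 𝕜 | ‖w‖ ∈ Icc r R} = Metric.closedBall 0 R \ Metric.ball 0 r := by
    ext w
    simp [and_comm]
  have hpi := isCompact_univ_pi fun _ : ι =>
    (isCompact_closedBall (0 : 𝕜) R).diff (Metric.isOpen_ball (x := 0) (ε := r))
  rw [← hannulus] at hpi
  simpa only [Set.pi, mem_univ, true_imp_iff, mem_ofPred_eq] using hpi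

variable [Fintype ι]

def monomialMap (α : ι → ι → ℕ) (z : ι → 𝕜) : ι → 𝕜 :=
  fun j => ∏ i, z i ^ α j i

theorem continuous_monomialMap (α : ι → ι → ℕ) :
    Continuous (monomialMap α : (ι → 𝕜) → ι → 𝕜) := by
  unfold monomialMap
  fun_prop

theorem logNorm_monomialMap (α : ι → ι → ℕ) {z : ι → 𝕜} (hz : ∀ i, z i ≠ 0) :
    logNorm (monomialMap α z) = of (fun j i => (α j i : ℝ)) *ᵥ logNorm z := by
  funext j
  simp only [logNorm, monomialMap, mulVec, dotProduct, of_apply, norm_prod,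
    norm_pow]
  rw [Real.log_prod fun i _ => pow_ne_zero _ (norm_ne_zero_iff.mpr (hz i))]
  simp only [Real.log_pow]

theorem norm_mem_Icc_of_norm_logNorm_le {z : ι → 𝕜} (hz : ∀ i, z i ≠ 0) {R : ℝ}
    (hR : ‖logNorm z‖ ≤ R) (i : ι) : ‖z i‖ ∈ Icc (Real.exp (-R)) (Real.exp R) := by
  have hi : |Real.log ‖z i‖| ≤ R := (norm_le_pi_norm (logNorm z) i).trans hR
  rw [← Real.exp_log (norm_pos_iff.mpr (hz i))]
  exact ⟨Real.exp_le_exp.mpr (abs_le.mp hi).1, Real.exp_le_exp.mpr (abs_le.mp hi).2⟩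

theorem exists_norm_logNorm_le_of_monomialMap_mem [DecidableEq ι] {α : ι → ι → ℕ}
    (hli : LinearIndependent ℝ (fun j i => (α j i : ℝ))) {K : Set (ι → 𝕜)} (hK : IsCompact K)
    (hK' : K ⊆ {z | ∀ i, z i ≠ 0}) :
    ∃ R, ∀ z : ι → 𝕜, (∀ i, z i ≠ 0) → monomialMap α z ∈ K → ‖logNorm z‖ ≤ R := by
  set A : Matrix ι ι ℝ := of fun j i => (α j i : ℝ)
  have hA : A⁻¹ * A = 1 :=
    nonsing_inv_mul A (A.isUnit_iff_isUnit_det.mp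
      (linearIndependent_rows_iff_isUnit.mp hli))
  have hcont : ContinuousOn (fun w => A⁻¹ *ᵥ logNorm w) K :=
    (mulVecLin A⁻¹).continuous_of_finiteDimensional.comp_continuousOn
      (continuousOn_logNorm.mono hK')
  obtain ⟨R, hR⟩ := (hK.image_of_continuousOn hcont).isBounded.subset_closedBall 0
  refine ⟨R, fun z hz hzK => ?_⟩
  have hlog : A⁻¹ *ᵥ logNorm (monomialMap α z) = logNorm z := by
    rw [logNorm_monomialMap α hz, mulVec_mulVec, hA, one_mulVec]
  simpa [hlog] using hR (mem_image_of_mem _ hzK)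

end MonomialMap

open MonomialMap in
/-- If α₁,…,αₙ ∈ ℕⁿ are linearly independent over ℝ, then
    F(z) = (z^{α₁},…,z^{αₙ}) is a proper map (ℂ*)ⁿ → (ℂ*)ⁿ : the preimage of
    every compact subset of (ℂ*)ⁿ is compact. -/
theorem monomial_map_proper (n : ℕ) (α : Fin n → Fin n → ℕ)
    (hli : LinearIndependent ℝ (fun j : Fin n => fun i : Fin n => (α j i : ℝ)))
    (K : Set (Fin n → ℂ)) (hK : IsCompact K) (hK' : K ⊆ {z | ∀ i, z i ≠ 0}) :
    IsCompact {z : Fin n → ℂ | (∀ i, z i ≠ 0) ∧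
      (fun j : Fin n => ∏ i, z i ^ (α j i)) ∈ K} := by
  obtain ⟨R, hR⟩ := exists_norm_logNorm_le_of_monomialMap_mem hli hK hK'
  have hpreimage : {z : Fin n → ℂ | (∀ i, z i ≠ 0) ∧ monomialMap α z ∈ K} =
      {z | ∀ i, ‖z i‖ ∈ Icc (Real.exp (-R)) (Real.exp R)} ∩ monomialMap α ⁻¹' K := by
    ext z
    refine ⟨fun ⟨hz, hzK⟩ => ⟨norm_mem_Icc_of_norm_logNorm_le hz (hR z hz hzK), hzK⟩,
      fun ⟨hz, hzK⟩ => ⟨fun i => norm_pos_iff.mp ((Real.exp_pos _).trans_le (hz i).1), hzK⟩⟩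
  exact hpreimage ▸ (isCompact_setOf_norm_mem_Icc _ _).inter_right
    (hK.isClosed.preimage (continuous_monomialMap α))
end

section
/- Let P ⊂ ℝⁿ be a convex polytope with vertices in ℤⁿ, with nonempty interior, contained in the box [0,M]ⁿ for some M > 0. Then the Euclidean distance from P to ℤⁿ \ P is at least 1/(√n · (n−1)! · M^{n−1}). -/
/-!
Let `z` be the point of `P` nearest to the lattice point `y ∉ P`. The vertices of `P` on which
`⟪y - z, ·⟫` is maximal span a face `F ∋ z`, and `y` lies off the affine span of `F`. Cramer's
rule, applied to a basis of the directions of `F` taken among the differences `w - w₀`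
(`w, w₀ ∈ F`, integral with entries of size at most `M`) together with `y - w₀`, produces an
integral vector `a` orthogonal to `F` with `⟪a, y - w₀⟫ ≠ 0` and entries bounded by
`(n-1)! M^(n-1)` (this needs `M ≥ 1`, which holds as `P` is not `{0}`). Then
`⟪a, y - z⟫ = ⟪a, y - w₀⟫` is a nonzero integer, so
`1 ≤ ‖a‖ ‖y - z‖ ≤ √n (n-1)! M^(n-1) dist(x, y)` for every `x ∈ P`.
-/

open scoped RealInnerProductSpace Nat
open Function

def integerLattice (n : ℕ) : AddSubgroup (EuclideanSpace ℝ (Fin n)) where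
  carrier := {x | ∀ i, ∃ k : ℤ, x i = k}
  zero_mem' _ := ⟨0, by simp⟩
  add_mem' hx hy i := by
    obtain ⟨k, hk⟩ := hx i
    obtain ⟨l, hl⟩ := hy i
    exact ⟨k + l, by simp [hk, hl]⟩
  neg_mem' hx i := by
    obtain ⟨k, hk⟩ := hx i
    exact ⟨-k, by simp [hk]⟩

theorem mem_integerLattice {n : ℕ} {x : EuclideanSpace ℝ (Fin n)} :
    x ∈ integerLattice n ↔ ∀ i, ∃ k : ℤ, x i = k :=
  Iff.rfl

theorem exists_inner_eq_intCast {n : ℕ} {x y : EuclideanSpace ℝ (Fin n)}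
    (hx : x ∈ integerLattice n) (hy : y ∈ integerLattice n) : ∃ k : ℤ, ⟪x, y⟫ = k := by
  choose k hk using hx
  choose l hl using hy
  exact ⟨∑ i, k i * l i, by simp [PiLp.inner_apply, hk, hl, mul_comm]⟩

theorem inner_eq_zero_of_mem_span {E : Type*} [NormedAddCommGroup E] [InnerProductSpace ℝ E]
    {a w : E} {S : Set E} (h : ∀ s ∈ S, ⟪a, s⟫ = 0) (hw : w ∈ Submodule.span ℝ S) : ⟪a, w⟫ = 0 :=
  Submodule.span_le (p := LinearMap.ker (innerₛₗ ℝ a)).2 h hw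

theorem Matrix.exists_det_eq_intCast {m : Type*} [Fintype m] [DecidableEq m]
    (A : Matrix m m ℝ) (hA : ∀ i j, ∃ k : ℤ, A i j = k) : ∃ k : ℤ, A.det = k := by
  choose K hK using hA
  refine ⟨(Matrix.of K).det, ?_⟩
  rw [show A = (Int.castRingHom ℝ).mapMatrix (Matrix.of K) by ext i j; simp [hK],
    ← RingHom.map_det, eq_intCast]

theorem Matrix.exists_injective_det_submatrix_ne_zero {K m n : Type*} [Field K] [Fintype m]
    [DecidableEq m] [Fintype n] (A : Matrix m n K) (hA : LinearIndependent K A.row) :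
    ∃ e : m → n, Injective e ∧ (A.submatrix id e).det ≠ 0 := by
  obtain ⟨κ, c, hc, hspan, hli⟩ := exists_linearIndependent' K A.col
  have : Fintype κ := Fintype.ofInjective c hc
  have hcard : Fintype.card m = Fintype.card κ := by
    rw [linearIndependent_iff_card_eq_finrank_span.1 hli, Set.finrank, hspan,
      ← rank_eq_finrank_span_cols, hA.rank_matrix]
  let σ := Fintype.equivOfCardEq hcard
  refine ⟨c ∘ σ, hc.comp σ.injective, ?_⟩
  rw [← isUnit_iff_ne_zero, ← Matrix.isUnit_iff_isUnit_det,
    ← linearIndependent_cols_iff_isUnit]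
  exact hli.comp σ σ.injective

theorem EuclideanSpace.inner_toLp_extend {ι : Type*} [Fintype ι] {n : ℕ} {e : ι → Fin n}
    (he : Injective e) (c : ι → ℝ) (x : EuclideanSpace ℝ (Fin n)) :
    ⟪WithLp.toLp 2 (extend e c 0), x⟫ = ∑ j, c j * x (e j) := by
  rw [PiLp.inner_apply]
  refine (Fintype.sum_of_injective e he _ _ (fun i hi => ?_) fun j => ?_).symm
  · simp [extend_apply' c (0 : Fin n → ℝ) i hi]
  · simp [he.extend_apply, mul_comm]

theorem Function.extend_apply_eq_or_exists {ι α R : Type*} (e : ι → α) (c : ι → R) (e' : α → R)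
    (i : α) : extend e c e' i = e' i ∨ ∃ j, extend e c e' i = c j := by
  classical
  rw [extend_def]
  split_ifs
  exacts [Or.inr ⟨_, rfl⟩, Or.inl rfl]

/-- `a` is the last column of the adjugate of a nonsingular maximal minor `B` of the matrix with
rows `b, v`, extended by zero. By `B * adj B = det B • 1` it is orthogonal to the `b k`, and its
entries are `d × d` minors of the `b k`. -/
theorem exists_int_normal_of_linearIndependent {d n : ℕ} {M : ℝ}
    (b : Fin d → EuclideanSpace ℝ (Fin n)) (v : EuclideanSpace ℝ (Fin n))
    (hli : LinearIndependent ℝ (Fin.snoc b v : Fin (d + 1) → EuclideanSpace ℝ (Fin n)))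
    (hb : ∀ k, b k ∈ integerLattice n) (hbM : ∀ k i, |b k i| ≤ M) :
    ∃ a ∈ integerLattice n, (∀ k, ⟪a, b k⟫ = 0) ∧
      ⟪a, v⟫ ≠ 0 ∧ ∀ i, |a i| ≤ d ! * M ^ d := by
  set r : Fin (d + 1) → EuclideanSpace ℝ (Fin n) := Fin.snoc b v
  obtain ⟨e, he, hdet⟩ := (Matrix.of fun k i => r k i).exists_injective_det_submatrix_ne_zero
    (hli.map' (WithLp.linearEquiv 2 ℝ _).toLinearMap (WithLp.linearEquiv 2 ℝ _).ker)
  set B := (Matrix.of fun k i => r k i).submatrix id e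
  set c : Fin (d + 1) → ℝ := fun j => B.adjugate j (Fin.last d)
  have hc : ∀ j, c j =
      (-1) ^ (d + j : ℕ) * (Matrix.of fun p q => b p (e (j.succAbove q))).det := by
    intro j
    simp only [c, Matrix.adjugate_fin_succ_eq_det_submatrix, Fin.val_last]
    congr 2
    ext p q
    simp [B, r, Fin.succAbove_last]
  have hcol : ∀ k, ∑ j, B k j * c j = if k = Fin.last d then B.det else 0 := by
    intro k
    have := congrFun (congrFun (Matrix.mul_adjugate B) k) (Fin.last d)
    rw [Matrix.mul_apply] at this
    rw [this]
    simp [Matrix.one_apply]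
  have hc_int : ∀ j, ∃ z : ℤ, c j = z := by
    intro j
    obtain ⟨z, hz⟩ := Matrix.exists_det_eq_intCast
      (Matrix.of fun p q => b p (e (j.succAbove q))) fun p q => hb p (e (j.succAbove q))
    exact ⟨(-1) ^ (d + j : ℕ) * z, by rw [hc, hz]; push_cast; rfl⟩
  have hc_le : ∀ j, |c j| ≤ d ! * M ^ d := by
    intro j
    rw [hc, abs_mul, abs_pow, abs_neg, abs_one, one_pow, one_mul]
    simpa using Matrix.det_le (A := Matrix.of fun p q => b p (e (j.succAbove q)))
      (abv := AbsoluteValue.abs) fun p q => hbM p (e (j.succAbove q))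
  set a : EuclideanSpace ℝ (Fin n) := WithLp.toLp 2 (extend e c 0)
  have hr : ∀ k, ⟪a, r k⟫ = if k = Fin.last d then B.det else 0 := by
    intro k
    rw [EuclideanSpace.inner_toLp_extend he, ← hcol]
    simp [B, mul_comm]
  refine ⟨a, fun i => ?_, fun k => ?_, ?_, fun i => ?_⟩
  · obtain h | ⟨j, h⟩ := extend_apply_eq_or_exists e c 0 i
    · exact ⟨0, by simp [a, h]⟩
    · obtain ⟨z, hz⟩ := hc_int j
      exact ⟨z, h.trans hz⟩
  · simpa [r] using hr k.castSucc
  · rw [show v = r (Fin.last d) by simp [r], hr, if_pos rfl]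
    exact hdet
  · obtain h | ⟨j, h⟩ := extend_apply_eq_or_exists e c 0 i
    · simpa [a, h] using (abs_nonneg _).trans (hc_le 0)
    · simpa [a, h] using hc_le j

theorem exists_int_normal_of_notMem_span {n : ℕ} {M : ℝ} (hM : 1 ≤ M)
    {S : Set (EuclideanSpace ℝ (Fin n))} (hS : S ⊆ integerLattice n)
    (hSM : ∀ s ∈ S, ∀ i, |s i| ≤ M)
    {v : EuclideanSpace ℝ (Fin n)} (hv : v ∉ Submodule.span ℝ S) :
    ∃ a ∈ integerLattice n,
      (∀ w ∈ Submodule.span ℝ S, ⟪a, w⟫ = 0) ∧ ⟪a, v⟫ ≠ 0 ∧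
      ∀ i, |a i| ≤ (n - 1)! * M ^ (n - 1) := by
  obtain ⟨b, hbS, hspan, hli⟩ := Submodule.exists_fun_fin_finrank_span_eq ℝ S
  have hsnoc := linearIndependent_finSnoc.2 ⟨hli, hspan ▸ hv⟩
  have hdn : Module.finrank ℝ (Submodule.span ℝ S) + 1 ≤ n := by
    simpa using hsnoc.fintype_card_le_finrank
  obtain ⟨a, ha_int, ha_b, ha_v, ha_le⟩ :=
    exists_int_normal_of_linearIndependent b v hsnoc (fun k => hS (hbS k)) fun k =>
      hSM _ (hbS k)
  refine ⟨a, ha_int, fun w hw => ?_, ha_v, fun i => (ha_le i).trans ?_⟩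
  · exact inner_eq_zero_of_mem_span (Set.forall_mem_range.2 ha_b) (hspan.symm ▸ hw)
  · gcongr <;> omega

theorem mem_convexHull_filter_of_forall_le {𝕜 E : Type*} [Field 𝕜] [LinearOrder 𝕜]
    [IsStrictOrderedRing 𝕜] [AddCommGroup E] [Module 𝕜 E] {s : Finset E} {f : E →ₗ[𝕜] 𝕜}
    {z : E}
    (hz : z ∈ convexHull 𝕜 (s : Set E)) (hf : ∀ p ∈ s, f p ≤ f z) :
    z ∈ convexHull 𝕜 (s.filter fun p => f p = f z : Set E) := by
  obtain ⟨w, hw0, hw1, hwz⟩ := Finset.mem_convexHull'.1 hz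
  have hsum : ∑ p ∈ s, w p * (f z - f p) = 0 := by
    simp only [mul_sub, Finset.sum_sub_distrib, ← Finset.sum_mul, hw1, one_mul]
    rw [sub_eq_zero, ← hwz]
    simp [map_sum]
  have hzero : ∀ p ∈ s, f p ≠ f z → w p = 0 := fun p hp hne => by
    have := (Finset.sum_eq_zero_iff_of_nonneg fun q hq =>
      mul_nonneg (hw0 q hq) (sub_nonneg.2 (hf q hq))).1 hsum p hp
    exact (mul_eq_zero.1 this).resolve_right (sub_ne_zero.2 hne.symm)
  refine Finset.mem_convexHull'.2 ⟨w, fun p hp => hw0 p (Finset.mem_filter.1 hp).1, ?_, ?_⟩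
  · rwa [Finset.sum_filter_of_ne fun p hp h => not_imp_comm.1 (hzero p hp) h]
  · rwa [Finset.sum_filter_of_ne fun p hp h =>
      not_imp_comm.1 (hzero p hp) (left_ne_zero_of_smul h)]

theorem EuclideanSpace.norm_le_sqrt_mul_of_forall_abs_le {n : ℕ} {x : EuclideanSpace ℝ (Fin n)}
    {C : ℝ} (hC : 0 ≤ C) (hx : ∀ i, |x i| ≤ C) : ‖x‖ ≤ √n * C :=
  calc ‖x‖ = √(∑ i, |x i| ^ 2) := by simp [EuclideanSpace.norm_eq]
    _ ≤ √(∑ _i : Fin n, C ^ 2) :=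
      Real.sqrt_le_sqrt (Finset.sum_le_sum fun i _ => pow_le_pow_left₀ (abs_nonneg _) (hx i) 2)
    _ = √n * C := by simp [Real.sqrt_mul, Real.sqrt_sq hC]

theorem exists_int_inner_sub_ne_zero_of_nearest {n : ℕ} {M : ℝ} (hM : 1 ≤ M)
    {V : Finset (EuclideanSpace ℝ (Fin n))} (hVlat : ∀ p ∈ V, p ∈ integerLattice n)
    (hVM : ∀ p ∈ V, ∀ q ∈ V, ∀ i, |p i - q i| ≤ M) {y z : EuclideanSpace ℝ (Fin n)}
    (hy : y ∈ integerLattice n) (hz : z ∈ convexHull ℝ (V : Set (EuclideanSpace ℝ (Fin n))))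
    (hyz : y ≠ z) (hnear : ∀ p ∈ V, ⟪y - z, p - z⟫ ≤ 0) :
    ∃ a : EuclideanSpace ℝ (Fin n), (∀ i, |a i| ≤ (n - 1)! * M ^ (n - 1)) ∧
      ∃ k : ℤ, k ≠ 0 ∧ ⟪a, y - z⟫ = k := by
  set W := V.filter fun p => innerₛₗ ℝ (y - z) p = innerₛₗ ℝ (y - z) z
  have hWV : W ⊆ V := Finset.filter_subset _ _
  have hWu : ∀ p ∈ W, ⟪y - z, p⟫ = ⟪y - z, z⟫ := fun p hp => (Finset.mem_filter.1 hp).2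
  have hzW : z ∈ convexHull ℝ (W : Set (EuclideanSpace ℝ (Fin n))) :=
    mem_convexHull_filter_of_forall_le hz fun p hp => by
      have := hnear p hp
      rwa [inner_sub_right, sub_nonpos] at this
  obtain ⟨w₀, hw₀⟩ := convexHull_nonempty_iff.1 ⟨z, hzW⟩
  have hspan := vectorSpan_eq_span_vsub_set_right ℝ hw₀
  have hzw : z - w₀ ∈ vectorSpan ℝ (W : Set (EuclideanSpace ℝ (Fin n))) := by
    rw [← direction_affineSpan]
    exact AffineSubspace.vsub_mem_direction (convexHull_subset_affineSpan _ hzW)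
      (subset_affineSpan _ _ hw₀)
  have hu : ∀ w ∈ vectorSpan ℝ (W : Set (EuclideanSpace ℝ (Fin n))), ⟪y - z, w⟫ = 0 := by
    rw [hspan]
    refine fun w => inner_eq_zero_of_mem_span ?_
    rintro _ ⟨p, hp, rfl⟩
    change ⟪y - z, p - w₀⟫ = 0
    rw [inner_sub_right, hWu p hp, hWu w₀ hw₀, sub_self]
  have hv : y - w₀ ∉ vectorSpan ℝ (W : Set (EuclideanSpace ℝ (Fin n))) := fun hv => by
    have := hu _ hv
    rw [← sub_add_sub_cancel y z w₀, inner_add_right, hu _ hzw, add_zero, inner_self_eq_zero,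
      sub_eq_zero] at this
    exact hyz this
  rw [hspan] at hv hzw
  obtain ⟨a, ha, ha_perp, ha_v, ha_le⟩ := exists_int_normal_of_notMem_span hM
    (by rintro _ ⟨p, hp, rfl⟩; exact sub_mem (hVlat _ (hWV hp)) (hVlat _ (hWV hw₀)))
    (by rintro _ ⟨p, hp, rfl⟩; exact hVM _ (hWV hp) _ (hWV hw₀)) hv
  obtain ⟨k, hk⟩ := exists_inner_eq_intCast ha (sub_mem hy (hVlat _ (hWV hw₀)))
  refine ⟨a, ha_le, k, fun hk0 => ha_v (by simp [hk, hk0]), ?_⟩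
  rw [← hk, ← sub_sub_sub_cancel_right y z w₀, inner_sub_right, ha_perp _ hzw, sub_zero]

theorem one_le_mul_dist_of_notMem_convexHull {n : ℕ} {M : ℝ} (hM : 1 ≤ M)
    {V : Finset (EuclideanSpace ℝ (Fin n))} (hVlat : ∀ p ∈ V, p ∈ integerLattice n)
    (hVM : ∀ p ∈ V, ∀ q ∈ V, ∀ i, |p i - q i| ≤ M) {x y : EuclideanSpace ℝ (Fin n)}
    (hx : x ∈ convexHull ℝ (V : Set (EuclideanSpace ℝ (Fin n)))) (hy : y ∈ integerLattice n)
    (hyV : y ∉ convexHull ℝ (V : Set (EuclideanSpace ℝ (Fin n)))) :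
    1 ≤ √n * ((n - 1)! * M ^ (n - 1)) * dist x y := by
  set P := convexHull ℝ (V : Set (EuclideanSpace ℝ (Fin n)))
  have hPconv : Convex ℝ P := convex_convexHull ℝ _
  obtain ⟨z, hzP, hz⟩ := exists_norm_eq_iInf_of_complete_convex ⟨x, hx⟩
    ((V.finite_toSet.isCompact_convexHull (𝕜 := ℝ)).isClosed.isComplete) hPconv y
  have hnear := (norm_eq_iInf_iff_real_inner_le_zero hPconv hzP).1 hz
  have hzx : ‖y - z‖ ≤ dist x y := by
    rw [hz, dist_comm, dist_eq_norm]
    exact ciInf_le ⟨0, Set.forall_mem_range.2 fun _ => norm_nonneg _⟩ (⟨x, hx⟩ : P)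
  obtain ⟨a, ha_le, k, hk0, hk⟩ :=
    exists_int_inner_sub_ne_zero_of_nearest hM hVlat hVM hy hzP (fun h => hyV (h ▸ hzP))
      fun p hp => hnear p (subset_convexHull ℝ _ hp)
  calc (1 : ℝ) ≤ |(k : ℝ)| := by exact_mod_cast Int.one_le_abs hk0
    _ = |⟪a, y - z⟫| := by rw [hk]
    _ ≤ ‖a‖ * ‖y - z‖ := abs_real_inner_le_norm a (y - z)
    _ ≤ √n * ((n - 1)! * M ^ (n - 1)) * dist x y := by
      gcongr
      have : 0 ≤ M := by linarith
      exact EuclideanSpace.norm_le_sqrt_mul_of_forall_abs_le (by positivity) ha_le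

theorem one_le_of_interior_convexHull_nonempty {n : ℕ} [NeZero n] {M : ℝ}
    {V : Finset (EuclideanSpace ℝ (Fin n))} (hVlat : ∀ v ∈ V, ∀ i, ∃ k : ℕ, v i = k)
    (hVM : ∀ v ∈ V, ∀ i, v i ≤ M)
    (hint : (interior (convexHull ℝ (V : Set (EuclideanSpace ℝ (Fin n))))).Nonempty) :
    1 ≤ M := by
  by_contra! hM
  have hV : (V : Set (EuclideanSpace ℝ (Fin n))) ⊆ {0} := fun v hv => by
    ext i
    obtain ⟨k, hk⟩ := hVlat v hv i
    have : (k : ℝ) < 1 := hk ▸ (hVM v hv i).trans_lt hM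
    simp [hk, Nat.lt_one_iff.1 (by exact_mod_cast this)]
  have := interior_mono ((convexHull_mono hV).trans (convexHull_singleton (𝕜 := ℝ) 0).le)
  rw [interior_singleton] at this
  exact hint.ne_empty (Set.subset_empty_iff.1 this)

theorem integral_polytope_lattice_dist_general (n : ℕ) (M : ℝ)
    (V : Finset (EuclideanSpace ℝ (Fin n)))
    (hVlat : ∀ v ∈ V, ∀ i, ∃ k : ℕ, v i = (k : ℝ))
    (hVbox : ∀ v ∈ V, ∀ i, 0 ≤ v i ∧ v i ≤ M)
    (P : Set (EuclideanSpace ℝ (Fin n))) (hP : P = convexHull ℝ (V : Set (EuclideanSpace ℝ (Fin n))))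
    (hint : (interior P).Nonempty) :
    ∀ x ∈ P, ∀ y : EuclideanSpace ℝ (Fin n),
      (∀ i, ∃ k : ℤ, y i = (k : ℝ)) → y ∉ P →
      1 / (Real.sqrt n * (Nat.factorial (n - 1) : ℝ) * M ^ (n - 1)) ≤ dist x y := by
  subst hP
  intro x hx y hy hyP
  obtain rfl | hn := Nat.eq_zero_or_pos n
  · exact absurd (Subsingleton.elim y x ▸ hx) hyP
  have : NeZero n := ⟨hn.ne'⟩
  have hM := one_le_of_interior_convexHull_nonempty hVlat (fun v hv i => (hVbox v hv i).2) hint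
  have hVint : ∀ v ∈ V, v ∈ integerLattice n := fun v hv => mem_integerLattice.2 fun i => by
    obtain ⟨k, hk⟩ := hVlat v hv i
    exact ⟨k, by simp [hk]⟩
  have hVM : ∀ p ∈ V, ∀ q ∈ V, ∀ i, |p i - q i| ≤ M := fun p hp q hq i => by
    have := hVbox p hp i; have := hVbox q hq i
    exact abs_sub_le_iff.2 ⟨by linarith, by linarith⟩
  have : 0 ≤ M := by linarith
  refine div_le_of_le_mul₀ (by positivity) dist_nonneg ?_
  linear_combination one_le_mul_dist_of_notMem_convexHull hM hVint hVM hx hy hyP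

/-- An integral convex polytope P ⊂ [0,M]ⁿ with nonempty interior
    has Euclidean distance at least 1/(√n · (n−1)! · M^{n−1}) to the lattice
    points outside it. -/
theorem integral_polytope_lattice_dist (n : ℕ) (M : ℝ) (hM : 0 < M)
    (V : Finset (EuclideanSpace ℝ (Fin n)))
    (hVlat : ∀ v ∈ V, ∀ i, ∃ k : ℕ, v i = (k : ℝ))
    (hVbox : ∀ v ∈ V, ∀ i, 0 ≤ v i ∧ v i ≤ M)
    (P : Set (EuclideanSpace ℝ (Fin n))) (hP : P = convexHull ℝ (V : Set (EuclideanSpace ℝ (Fin n))))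
    (hint : (interior P).Nonempty) :
    ∀ x ∈ P, ∀ y : EuclideanSpace ℝ (Fin n),
      (∀ i, ∃ k : ℤ, y i = (k : ℝ)) → y ∉ P →
      1 / (Real.sqrt n * (Nat.factorial (n - 1) : ℝ) * M ^ (n - 1)) ≤ dist x y :=
  integral_polytope_lattice_dist_general n M V hVlat hVbox P hP hint
end

section
/- Let S ⊂ ℝ₊ⁿ be a compact convex set with 0 ∈ S and nonempty interior, and let K ⊂ (ℝ₊*)ⁿ (points with all coordinates real and strictly positive) be compact. Then the S-hull K̂^S is a compact subset of (ℝ₊*)ⁿ; in particular K̂^S ∩ (ℂⁿ \ (ℂ*)ⁿ) = ∅ and K̂^S ⊂ ℝⁿ. -/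
open scoped BigOperators

noncomputable section

/-- `p` is a polynomial of the class `P^S(ℂⁿ)`: for some `m`, all exponents of `p`
    lie in `(mS) ∩ ℕⁿ` (equivalently in the cone `ℝ₊S`). -/
def IsPolyS {n : ℕ} (S : Set (Fin n → ℝ)) (p : (Fin n → ℂ) → ℂ) : Prop :=
  ∃ (m : ℕ) (c : (Fin n → ℕ) →₀ ℂ),
    (∀ α ∈ c.support, ∃ s ∈ S, (fun i => (α i : ℝ)) = (m : ℝ) • s) ∧
    p = fun z => ∑ α ∈ c.support, c α * ∏ i, z i ^ (α i)

/-- The `S`-hull of a set `K ⊂ ℂⁿ`. -/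
def hullS {n : ℕ} (S : Set (Fin n → ℝ)) (K : Set (Fin n → ℂ)) : Set (Fin n → ℂ) :=
  {z | ∀ p, IsPolyS S p → ‖p z‖ ≤ sSup ((fun w => ‖p w‖) '' K)}

/-!
For `γ ∈ mS ∩ ℕⁿ` and `t ∈ ℂ` the polynomial `t - z^γ` lies in `P^S` (because `0 ∈ S`), so
every `z ∈ K̂^S` satisfies `|z^γ - t| ≤ max_{w ∈ K} |w^γ - t|` for all `t`. On `K` the monomial
`w^γ` takes values in a compact interval `[u, v] ⊂ (0, ∞)`, and a point whose distance to every
`t` is at most the largest distance from `t` to `[u, v]` lies in `[u, v]` (take `t` far beyond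
its nearest point in `[u, v]`). An interior point of `S` gives `m` and `β` with `β` and every
`β + eᵢ` in `mS ∩ ℕⁿ`, so `zᵢ = z^(β + eᵢ) / z^β` is a positive real, bounded above and away
from `0` on `K̂^S`. The hull is closed, hence compact.
-/

open scoped RealInnerProductSpace Pointwise

theorem IsCompact.mem_of_forall_exists_norm_sub_le {E : Type*} [NormedAddCommGroup E]
    [InnerProductSpace ℝ E] {C : Set E} {ζ : E} (hC : IsCompact C) (hCc : Convex ℝ C)
    (h : ∀ t, ∃ x ∈ C, ‖ζ - t‖ ≤ ‖x - t‖) : ζ ∈ C := by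
  obtain ⟨p, hpC, hp⟩ := exists_norm_eq_iInf_of_complete_convex
    (let ⟨x, hx, _⟩ := h 0; ⟨x, hx⟩) hC.isComplete hCc ζ
  have hobtuse := (norm_eq_iInf_iff_real_inner_le_zero hCc hpC).1 hp
  obtain ⟨M, hM⟩ := hC.isBounded.subset_closedBall p
  by_contra hζ
  set d := ‖ζ - p‖
  have hd : 0 < d := norm_pos_iff.2 (sub_ne_zero.2 fun h => hζ (h ▸ hpC))
  -- For `t = p - l • (ζ - p)`, `‖ζ - t‖² = (1 + l)²d²` while obtuseness at `p` gives
  -- `‖x - t‖² ≤ M² + l²d²` on `C`; this `l` makes the former larger.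
  set l := M ^ 2 / d ^ 2
  obtain ⟨x, hxC, hx⟩ := h (p - l • (ζ - p))
  have hζt : ζ - (p - l • (ζ - p)) = (1 + l) • (ζ - p) := by module
  have hxt : x - (p - l • (ζ - p)) = (x - p) + l • (ζ - p) := by abel
  have hxM : ‖x - p‖ ≤ M := by simpa [dist_eq_norm] using hM hxC
  have hl : l * d ^ 2 = M ^ 2 := div_mul_cancel₀ _ (by positivity)
  rw [hζt, hxt] at hx
  have := pow_le_pow_left₀ (norm_nonneg _) hx 2
  rw [norm_add_sq_real, norm_smul, norm_smul, real_inner_smul_right,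
    Real.norm_of_nonneg (by positivity), Real.norm_of_nonneg (by positivity)] at this
  have := hobtuse x hxC
  rw [real_inner_comm] at this
  nlinarith [norm_nonneg (x - p), mul_nonneg (by positivity : (0:ℝ) ≤ l) (neg_nonneg.2 this)]

theorem exists_natCast_smul_closedBall_subset {E : Type*} [NormedAddCommGroup E]
    [NormedSpace ℝ E] {S : Set E} {s₀ : E} (hs₀ : s₀ ∈ interior S) :
    ∃ m : ℕ, Metric.closedBall ((m : ℝ) • s₀) 1 ⊆ (m : ℝ) • S := by
  obtain ⟨ε, hε, hball⟩ := Metric.nhds_basis_closedBall.mem_iff.1 (mem_interior_iff_mem_nhds.1 hs₀)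
  obtain ⟨m, hm⟩ := exists_nat_gt ε⁻¹
  have hm0 : (0 : ℝ) < m := (inv_pos.2 hε).trans hm
  refine ⟨m, ?_⟩
  calc Metric.closedBall ((m : ℝ) • s₀) 1
      = (m : ℝ) • Metric.closedBall s₀ (m : ℝ)⁻¹ := by
        rw [smul_closedBall _ _ (by positivity), Real.norm_of_nonneg hm0.le,
          mul_inv_cancel₀ hm0.ne']
    _ ⊆ (m : ℝ) • S := Set.smul_set_mono ((Metric.closedBall_subset_closedBall
        ((inv_lt_comm₀ hε hm0).1 hm).le).trans hball)

theorem abs_natFloor_add_sub_le {x : ℝ} (hx : 0 ≤ x) {k : ℕ} (hk : k ≤ 1) :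
    |((⌊x⌋₊ + k : ℕ) : ℝ) - x| ≤ 1 := by
  have h1 := Nat.floor_le hx
  have h2 := Nat.lt_floor_add_one x
  have h3 : (k : ℝ) ≤ 1 := by exact_mod_cast hk
  rw [abs_le]
  push_cast
  constructor <;> linarith [(Nat.cast_nonneg k : (0 : ℝ) ≤ k)]

theorem mem_ofReal_Icc_div {a c : ℂ} {u v u' v' : ℝ} (hu : 0 < u) (hu' : 0 ≤ u')
    (ha : a ∈ Complex.ofReal '' Set.Icc u v) (hac : a * c ∈ Complex.ofReal '' Set.Icc u' v') :
    c ∈ Complex.ofReal '' Set.Icc (u' / v) (v' / u) := by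
  obtain ⟨x, ⟨hux, hxv⟩, rfl⟩ := ha
  obtain ⟨y, ⟨hu'y, hyv'⟩, hy⟩ := hac
  have hx : 0 < x := hu.trans_le hux
  refine ⟨y / x, ⟨div_le_div₀ (hu'.trans hu'y) hu'y hx hxv,
    div_le_div₀ (hu'.trans (hu'y.trans hyv')) hyv' hu hux⟩, ?_⟩
  rw [Complex.ofReal_div, hy, mul_div_cancel_left₀ _ (by exact_mod_cast hx.ne')]

section Monomials

variable {n : ℕ}

theorem exists_exponent_mem_smul_and_add_single_mem {S : Set (Fin n → ℝ)}
    (hSpos : ∀ s ∈ S, ∀ i, 0 ≤ s i) (hSint : (interior S).Nonempty) :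
    ∃ (m : ℕ) (β : Fin n → ℕ), (fun j => (β j : ℝ)) ∈ (m : ℝ) • S ∧
      ∀ i, (fun j => ((β + Pi.single i 1 : Fin n → ℕ) j : ℝ)) ∈ (m : ℝ) • S := by
  obtain ⟨s₀, hs₀⟩ := hSint
  obtain ⟨m, hm⟩ := exists_natCast_smul_closedBall_subset hs₀
  set β : Fin n → ℕ := fun j => ⌊(m : ℝ) * s₀ j⌋₊
  have hnear (k : Fin n → ℕ) (hk : k ≤ 1) : (fun j => ((β + k) j : ℝ)) ∈ (m : ℝ) • S :=
    hm <| (dist_pi_le_iff zero_le_one).2 fun j => abs_natFloor_add_sub_le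
      (mul_nonneg m.cast_nonneg (hSpos s₀ (interior_subset hs₀) j)) (hk j)
  refine ⟨m, β, by simpa using hnear 0 zero_le_one, fun i => hnear _ fun j => ?_⟩
  by_cases hj : j = i <;> simp [hj]

def monomialFn (γ : Fin n → ℕ) (z : Fin n → ℂ) : ℂ := ∏ i, z i ^ γ i

@[fun_prop]
theorem continuous_monomialFn (γ : Fin n → ℕ) : Continuous (monomialFn γ) := by
  unfold monomialFn; fun_prop

theorem monomialFn_add_single (γ : Fin n → ℕ) (i : Fin n) (z : Fin n → ℂ) :
    monomialFn (γ + Pi.single i 1) z = monomialFn γ z * z i := by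
  simp only [monomialFn, Pi.add_apply, pow_add, Finset.prod_mul_distrib]
  congr 1
  simp [Pi.single_apply, pow_ite]

theorem monomialFn_of_forall_im_eq_zero (γ : Fin n → ℕ) {w : Fin n → ℂ}
    (hw : ∀ i, (w i).im = 0) : monomialFn γ w = ((∏ i, (w i).re ^ γ i : ℝ) : ℂ) := by
  push_cast
  exact Finset.prod_congr rfl fun i _ => by
    congr 1; exact Complex.ext (by simp) (by simp [hw i])

theorem isPolyS_const_sub_monomialFn {S : Set (Fin n → ℝ)} (hS0 : (0 : Fin n → ℝ) ∈ S)
    {m : ℕ} {γ : Fin n → ℕ} (hγ : (fun i => (γ i : ℝ)) ∈ (m : ℝ) • S) (t : ℂ) :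
    IsPolyS S (fun z => t - monomialFn γ z) := by
  obtain ⟨s, hs, hγs⟩ := Set.mem_smul_set.1 hγ
  refine ⟨m, Finsupp.single 0 t - Finsupp.single γ 1, fun α hα => ?_, ?_⟩
  · rcases Finset.mem_union.1 (Finsupp.support_sub hα) with h | h
    · rw [Finset.mem_singleton.1 (Finsupp.support_single_subset h)]
      exact ⟨0, hS0, by ext; simp⟩
    · rw [Finset.mem_singleton.1 (Finsupp.support_single_subset h)]
      exact ⟨s, hs, hγs.symm⟩
  · funext z
    change _ = (Finsupp.single 0 t - Finsupp.single γ 1).sum fun α a => a * ∏ i, z i ^ α i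
    rw [Finsupp.sum_sub_index (fun _ _ _ => sub_mul _ _ _), Finsupp.sum_single_index (by simp),
      Finsupp.sum_single_index (by simp)]
    simp [monomialFn]

theorem IsPolyS.continuous {S : Set (Fin n → ℝ)} {p : (Fin n → ℂ) → ℂ}
    (h : IsPolyS S p) : Continuous p := by
  obtain ⟨m, c, -, rfl⟩ := h
  fun_prop

theorem isClosed_hullS (S : Set (Fin n → ℝ)) (K : Set (Fin n → ℂ)) :
    IsClosed (hullS S K) := by
  simp only [hullS, Set.ofPred_forall]
  exact isClosed_iInter fun p => isClosed_iInter fun hp =>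
    isClosed_le hp.continuous.norm continuous_const

theorem monomialFn_mem_of_mem_hullS {S : Set (Fin n → ℝ)} {K : Set (Fin n → ℂ)}
    {C : Set ℂ} {m : ℕ} {γ : Fin n → ℕ} {z : Fin n → ℂ} (hS0 : (0 : Fin n → ℝ) ∈ S)
    (hγ : (fun i => (γ i : ℝ)) ∈ (m : ℝ) • S) (hK : IsCompact K) (hC : IsCompact C)
    (hCc : Convex ℝ C) (hKC : monomialFn γ '' K ⊆ C) (hz : z ∈ hullS S K) :
    monomialFn γ z ∈ C := by
  have hbound (t : ℂ) : ‖t - monomialFn γ z‖ ≤ sSup ((fun w => ‖t - monomialFn γ w‖) '' K) :=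
    hz _ (isPolyS_const_sub_monomialFn hS0 hγ t)
  rcases K.eq_empty_or_nonempty with rfl | hne
  -- the bound degenerates to `‖1‖ ≤ sSup ∅ = 0`
  · have h := hbound (monomialFn γ z + 1)
    norm_num at h
  refine hC.mem_of_forall_exists_norm_sub_le hCc fun t => ?_
  obtain ⟨w, hw, hsup⟩ :=
    hK.exists_sSup_image_eq hne (f := fun w => ‖t - monomialFn γ w‖) (by fun_prop)
  refine ⟨monomialFn γ w, hKC (Set.mem_image_of_mem _ hw), ?_⟩
  rw [norm_sub_rev, norm_sub_rev _ t, ← hsup]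
  exact hbound t

theorem exists_monomialFn_mem_ofReal_Icc {S : Set (Fin n → ℝ)} {K : Set (Fin n → ℂ)}
    {m : ℕ} {γ : Fin n → ℕ} (hS0 : (0 : Fin n → ℝ) ∈ S)
    (hγ : (fun i => (γ i : ℝ)) ∈ (m : ℝ) • S) (hK : IsCompact K)
    (hKpos : K ⊆ {z | ∀ i, (z i).im = 0 ∧ 0 < (z i).re}) :
    ∃ u v : ℝ, 0 < u ∧ u ≤ v ∧
      ∀ z ∈ hullS S K, monomialFn γ z ∈ Complex.ofReal '' Set.Icc u v := by
  set g : (Fin n → ℂ) → ℝ := fun w => ∏ i, (w i).re ^ γ i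
  have hg : Continuous g := by fun_prop
  obtain ⟨u, hu, hug⟩ := hK.exists_forall_le' hg.continuousOn (a := 0) fun w hw =>
    Finset.prod_pos fun i _ => pow_pos (hKpos hw i).2 _
  obtain ⟨v, hv⟩ := hK.bddAbove_image hg.continuousOn
  refine ⟨u, max u v, hu, le_max_left _ _, fun z hz => monomialFn_mem_of_mem_hullS hS0 hγ hK
    (isCompact_Icc.image Complex.continuous_ofReal)
    ((convex_Icc _ _).is_linear_image Complex.ofRealCLM.toLinearMap.isLinear) ?_ hz⟩
  rintro _ ⟨w, hw, rfl⟩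
  rw [monomialFn_of_forall_im_eq_zero γ fun i => (hKpos hw i).1]
  exact ⟨g w, ⟨hug w hw, (hv ⟨w, hw, rfl⟩).trans (le_max_right _ _)⟩, rfl⟩

theorem exists_hullS_subset_pi_ofReal_Icc {S : Set (Fin n → ℝ)} {K : Set (Fin n → ℂ)}
    (hS0 : (0 : Fin n → ℝ) ∈ S) (hSpos : ∀ s ∈ S, ∀ i, 0 ≤ s i)
    (hSint : (interior S).Nonempty) (hK : IsCompact K)
    (hKpos : K ⊆ {z | ∀ i, (z i).im = 0 ∧ 0 < (z i).re}) :
    ∃ a b : Fin n → ℝ, (∀ i, 0 < a i) ∧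
      hullS S K ⊆ Set.univ.pi fun i => Complex.ofReal '' Set.Icc (a i) (b i) := by
  obtain ⟨m, β, hβ, hβi⟩ := exists_exponent_mem_smul_and_add_single_mem hSpos hSint
  obtain ⟨u, v, hu, huv, hmem⟩ := exists_monomialFn_mem_ofReal_Icc hS0 hβ hK hKpos
  choose u' v' hu' _ hmem' using fun i => exists_monomialFn_mem_ofReal_Icc hS0 (hβi i) hK hKpos
  refine ⟨fun i => u' i / v, fun i => v' i / u, fun i => div_pos (hu' i) (hu.trans_le huv),
    fun z hz i _ => mem_ofReal_Icc_div hu (hu' i).le (hmem z hz) ?_⟩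
  rw [← monomialFn_add_single]
  exact hmem' i z hz

end Monomials

theorem hull_of_positive_compact_general (n : ℕ) (S : Set (Fin n → ℝ))
    (hS0 : (0 : Fin n → ℝ) ∈ S)
    (hSpos : ∀ s ∈ S, ∀ i, 0 ≤ s i) (hSint : (interior S).Nonempty)
    (K : Set (Fin n → ℂ)) (hK : IsCompact K)
    (hKpos : K ⊆ {z | ∀ i, (z i).im = 0 ∧ 0 < (z i).re}) :
    IsCompact (hullS S K) ∧
    hullS S K ⊆ {z | ∀ i, (z i).im = 0 ∧ 0 < (z i).re} := by
  obtain ⟨a, b, ha, hsub⟩ := exists_hullS_subset_pi_ofReal_Icc hS0 hSpos hSint hK hKpos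
  refine ⟨(isCompact_univ_pi fun i => isCompact_Icc.image Complex.continuous_ofReal)
    |>.of_isClosed_subset (isClosed_hullS S K) hsub, fun z hz i => ?_⟩
  obtain ⟨x, hx, hxz⟩ := hsub hz i (Set.mem_univ i)
  rw [← hxz]
  exact ⟨Complex.ofReal_im x, (ha i).trans_le hx.1⟩

/-- If S ⊂ ℝ₊ⁿ is compact convex with 0 ∈ S and nonempty interior,
    and K is a compact subset of the open positive orthant (ℝ₊*)ⁿ ⊂ ℂⁿ,
    then the S-hull K̂^S is a compact subset of (ℝ₊*)ⁿ. -/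
theorem hull_of_positive_compact (n : ℕ) (S : Set (Fin n → ℝ))
    (hScomp : IsCompact S) (hSconv : Convex ℝ S) (hS0 : (0 : Fin n → ℝ) ∈ S)
    (hSpos : ∀ s ∈ S, ∀ i, 0 ≤ s i) (hSint : (interior S).Nonempty)
    (K : Set (Fin n → ℂ)) (hK : IsCompact K)
    (hKpos : K ⊆ {z | ∀ i, (z i).im = 0 ∧ 0 < (z i).re}) :
    IsCompact (hullS S K) ∧
    hullS S K ⊆ {z | ∀ i, (z i).im = 0 ∧ 0 < (z i).re} :=
  hull_of_positive_compact_general n S hS0 hSpos hSint K hK hKpos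
end
end

section
/- Let A ⊂ ℝⁿ be bounded and nonempty, S ⊂ ℝⁿ compact convex with 0 ∈ S. Let χ_A be the indicator function of A (0 on A, +∞ off A) and φ_S(ξ) = sup_{s∈S}⟨s,ξ⟩. If v : ℝⁿ → ℝ is convex, v ≤ 0 on A, and v ≤ φ_S + c for some constant c, then v(ξ) ≤ sup_{s ∈ S} (⟨s, ξ⟩ − φ_A(s)) for all ξ ∈ ℝⁿ, where φ_A(s) = sup_{a∈A} ⟨a,s⟩. -/
/-!
Fix `ξ`. A finite convex function on `ℝⁿ` has a subgradient `s₀` at `ξ`, obtained by separating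
`(ξ, v ξ)` from the open strict epigraph of `v`. The bound `v ≤ φ_S + c` then gives
`⟨s₀, ·⟩ ≤ φ_S + const`, and since both sides are positively homogeneous the constant can be
dropped; a separation argument turns `⟨s₀, ·⟩ ≤ φ_S` into `s₀ ∈ S`. Finally the subgradient
inequality at the points of `A`, where `v ≤ 0`, gives `φ_A(s₀) ≤ ⟨s₀, ξ⟩ - v ξ`, so `v ξ` is
dominated by the term `s = s₀` of the supremum.
-/

open scoped BigOperators

noncomputable section

/-- The Euclidean dot product on Fin n → ℝ. -/
def dotp {n : ℕ} (x y : Fin n → ℝ) : ℝ := ∑ i, x i * y i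

open Set Filter Topology Matrix

theorem ConvexOn.exists_subgradient {E : Type*} [TopologicalSpace E] [AddCommGroup E]
    [Module ℝ E] [IsTopologicalAddGroup E] [ContinuousSMul ℝ E] {v : E → ℝ}
    (hv : ConvexOn ℝ univ v) (hcont : Continuous v) (ξ : E) :
    ∃ ℓ : StrongDual ℝ E, ∀ x, v ξ + ℓ (x - ξ) ≤ v x := by
  have hopen : IsOpen {p : E × ℝ | p.1 ∈ univ ∧ v p.1 < p.2} := by
    simpa using isOpen_lt (hcont.comp continuous_fst) continuous_snd
  obtain ⟨f, hf⟩ := geometric_hahn_banach_open_point hv.convex_strict_epigraph hopen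
    (x := (ξ, v ξ)) (by simp)
  set g : StrongDual ℝ E := f.comp (ContinuousLinearMap.inl ℝ E ℝ)
  set β := f (0, 1)
  have hf_apply : ∀ x t, f (x, t) = g x + t * β := fun x t => by
    rw [show ((x, t) : E × ℝ) = (x, 0) + t • (0, 1) by simp, map_add, map_smul, smul_eq_mul]
    rfl
  have hsep : ∀ x t, v x < t → g x + t * β < g ξ + v ξ * β := fun x t ht => by
    simpa only [hf_apply] using hf (x, t) ⟨trivial, ht⟩
  have hβ : 0 < -β := by linarith [hsep ξ (v ξ + 1) (by linarith)]
  have hsep_le : ∀ x, g x + v x * β ≤ g ξ + v ξ * β := fun x =>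
    le_of_forall_pos_lt_add fun ε hε => by
      have hεβ : ε / -β * β = -ε := by
        rw [div_neg, neg_mul, div_mul_cancel₀ ε (neg_ne_zero.mp hβ.ne')]
      linarith [hsep x (v x + ε / -β) (by linarith [div_pos hε hβ])]
  refine ⟨(-β)⁻¹ • g, fun x => ?_⟩
  have key : g (x - ξ) ≤ -β * (v x - v ξ) := by linarith [hsep_le x, map_sub g x ξ]
  have := (inv_mul_le_iff₀ hβ).2 key
  simp only [_root_.smul_apply, smul_eq_mul]
  linarith

section

variable {ι : Type*} [Fintype ι]

/-- The support function `φ_A(y) = sup_{a ∈ A} ⟨a, y⟩`; it takes the junk value `0` where the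
supremum does not exist. -/
def supportFun (A : Set (ι → ℝ)) (y : ι → ℝ) : ℝ := sSup ((· ⬝ᵥ y) '' A)

theorem StrongDual.exists_dotProduct_eq (f : StrongDual ℝ (ι → ℝ)) :
    ∃ w : ι → ℝ, ∀ x, f x = w ⬝ᵥ x := by
  classical
  exact ⟨(dotProductEquiv ℝ ι).symm f.toLinearMap, fun x =>
    (LinearMap.congr_fun ((dotProductEquiv ℝ ι).apply_symm_apply f.toLinearMap) x).symm⟩

theorem ConvexOn.exists_dotProduct_subgradient {v : (ι → ℝ) → ℝ} (hv : ConvexOn ℝ univ v)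
    (ξ : ι → ℝ) : ∃ s : ι → ℝ, ∀ x, v ξ + s ⬝ᵥ (x - ξ) ≤ v x := by
  obtain ⟨ℓ, hℓ⟩ := hv.exists_subgradient (continuousOn_univ.mp (hv.continuousOn isOpen_univ)) ξ
  obtain ⟨s, hs⟩ := ℓ.exists_dotProduct_eq
  exact ⟨s, fun x => hs (x - ξ) ▸ hℓ x⟩

theorem Convex.mem_of_forall_dotProduct_le {S : Set (ι → ℝ)} (hconv : Convex ℝ S)
    (hclosed : IsClosed S) {x : ι → ℝ}
    (hx : ∀ w u, (∀ s ∈ S, s ⬝ᵥ w ≤ u) → x ⬝ᵥ w ≤ u) : x ∈ S := by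
  by_contra hxS
  obtain ⟨f, u, hfS, hfx⟩ := geometric_hahn_banach_closed_point hconv hclosed hxS
  obtain ⟨w, hw⟩ := f.exists_dotProduct_eq
  simp only [hw, dotProduct_comm w] at hfS hfx
  exact (hx w u fun s hs => (hfS s hs).le).not_gt hfx

theorem dotProduct_le_of_le_supportFun_add {S : Set (ι → ℝ)} (hS0 : 0 ∈ S) {x : ι → ℝ} {C : ℝ}
    (hx : ∀ y, x ⬝ᵥ y ≤ supportFun S y + C) {w : ι → ℝ} {u : ℝ}
    (hw : ∀ s ∈ S, s ⬝ᵥ w ≤ u) : x ⬝ᵥ w ≤ u := by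
  have hu : 0 ≤ u := by simpa using hw 0 hS0
  have hscaled : ∀ t > 0, x ⬝ᵥ w ≤ u + C / t := fun t ht => by
    have hsup : supportFun S (t • w) ≤ t * u := by
      refine Real.sSup_le ?_ (by positivity)
      rintro _ ⟨s, hs, rfl⟩
      simp only [dotProduct_smul, smul_eq_mul]
      exact mul_le_mul_of_nonneg_left (hw s hs) ht.le
    have := hx (t • w)
    rw [dotProduct_smul, smul_eq_mul] at this
    rw [← sub_le_iff_le_add', le_div_iff₀ ht]
    linarith
  have hlim : Tendsto (fun t => u + C / t) atTop (𝓝 u) := by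
    simpa using (tendsto_const_nhds (x := u)).add (tendsto_const_nhds.div_atTop tendsto_id)
  exact ge_of_tendsto hlim ((eventually_gt_atTop 0).mono hscaled)

theorem Bornology.IsBounded.bddAbove_image_dotProduct {A : Set (ι → ℝ)}
    (hA : Bornology.IsBounded A) (y : ι → ℝ) : BddAbove ((· ⬝ᵥ y) '' A) :=
  (hA.isCompact_closure.image (continuous_id.dotProduct continuous_const)).bddAbove.mono
    (image_mono subset_closure)

theorem dotProduct_le_supportFun {A : Set (ι → ℝ)} (hA : Bornology.IsBounded A) {a : ι → ℝ}
    (ha : a ∈ A) (y : ι → ℝ) : a ⬝ᵥ y ≤ supportFun A y :=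
  le_csSup (hA.bddAbove_image_dotProduct y) (mem_image_of_mem _ ha)

theorem bddAbove_image_dotProduct_sub_supportFun {A S : Set (ι → ℝ)}
    (hA : Bornology.IsBounded A) (hAne : A.Nonempty) (hS : IsCompact S) (ξ : ι → ℝ) :
    BddAbove ((fun s => s ⬝ᵥ ξ - supportFun A s) '' S) := by
  obtain ⟨a, ha⟩ := hAne
  obtain ⟨B, hB⟩ := (hS.image (f := fun s => s ⬝ᵥ ξ - a ⬝ᵥ s) (by fun_prop)).bddAbove
  refine ⟨B, ?_⟩
  rintro _ ⟨s, hs, rfl⟩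
  linarith [hB (mem_image_of_mem _ hs), dotProduct_le_supportFun hA ha s]

end

/-- If v is convex, v ≤ 0 on a nonempty bounded A, and
    v ≤ φ_S + c, then v(ξ) ≤ sup_{s∈S} (⟨s,ξ⟩ − φ_A(s)) for all ξ. -/
theorem convex_le_LF_bound (n : ℕ) (A S : Set (Fin n → ℝ))
    (hAne : A.Nonempty) (hAb : Bornology.IsBounded A)
    (hScomp : IsCompact S) (hSconv : Convex ℝ S) (hS0 : (0 : Fin n → ℝ) ∈ S)
    (v : (Fin n → ℝ) → ℝ) (hconv : ConvexOn ℝ Set.univ v)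
    (hvA : ∀ a ∈ A, v a ≤ 0)
    (c : ℝ) (hvS : ∀ ξ, v ξ ≤ sSup ((fun s => dotp s ξ) '' S) + c) :
    ∀ ξ, v ξ ≤ sSup ((fun s => dotp s ξ - sSup ((fun a => dotp a s) '' A)) '' S) := by
  intro ξ
  change v ξ ≤ sSup ((fun s => s ⬝ᵥ ξ - supportFun A s) '' S)
  have hvS' : ∀ y, v y ≤ supportFun S y + c := hvS
  obtain ⟨s₀, hs₀⟩ := hconv.exists_dotProduct_subgradient ξ
  have hs₀_le : ∀ y, s₀ ⬝ᵥ y ≤ supportFun S y + (c - v ξ + s₀ ⬝ᵥ ξ) := fun y => by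
    linarith [hs₀ y, hvS' y, dotProduct_sub s₀ y ξ]
  have hs₀S : s₀ ∈ S := hSconv.mem_of_forall_dotProduct_le hScomp.isClosed
    fun _ _ hw => dotProduct_le_of_le_supportFun_add hS0 hs₀_le hw
  have hA : supportFun A s₀ ≤ s₀ ⬝ᵥ ξ - v ξ := by
    refine csSup_le (hAne.image _) ?_
    rintro _ ⟨a, ha, rfl⟩
    linarith [hs₀ a, hvA a ha, dotProduct_sub s₀ a ξ, dotProduct_comm a s₀]
  calc v ξ ≤ s₀ ⬝ᵥ ξ - supportFun A s₀ := by linarith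
    _ ≤ _ := le_csSup (bddAbove_image_dotProduct_sub_supportFun hAb hAne hScomp ξ)
      (mem_image_of_mem _ hs₀S)
end
end

section
/- Let f(z) = Σ_{α∈ℕⁿ} a_α z^α be a power series converging normally on a Reinhardt domain Ω ∋ 0 in ℂⁿ, and suppose there exist ξ ∈ ℝⁿ, a radius r ∈ (ℝ₊*)ⁿ, a constant C, and α₀ ∈ ℕⁿ with ⟨α₀, ξ⟩ > 0, such that |f| ≤ C on the polycircles C_t = {z : |z_j| = r_j e^{tξ_j}, j = 1,…,n} for all t ≥ 0 and C_t ⊂ Ω for all t ≥ 0. Then a_{α₀} = 0. -/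
/-!
Integrating `f (ρ e^{iθ}) e^{-i⟨α₀, θ⟩}` over the torus `θ ∈ (0, 2π]ⁿ` term by term (the series
converges absolutely on the polycircle) isolates the coefficient `a α₀`, which gives the Cauchy
inequality `‖a α₀‖ ρ^α₀ ≤ sup_{|zᵢ| = ρᵢ} ‖f z‖`. On `C_t` the polyradius is `ρ = r e^{tξ}`, so
`ρ^α₀ = r^α₀ e^{t⟨α₀, ξ⟩}` grows without bound while the supremum stays below `C`.
-/

open MeasureTheory Set Filter Real
open Complex (I)
open scoped Complex

lemma integral_exp_int_mul_I (k : ℤ) :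
    ∫ u in Ioc 0 (2 * π), cexp (k * u * I) = if k = 0 then (2 * π : ℂ) else 0 := by
  rw [← intervalIntegral.integral_of_le (by positivity)]
  split_ifs with hk
  · simp [hk]
  · have hkI : (k : ℂ) * I ≠ 0 := by simp [hk, Complex.I_ne_zero]
    simp_rw [mul_right_comm _ _ I]
    rw [integral_exp_mul_complex hkI,
      show (k : ℂ) * I * ↑(2 * π) = k * (2 * π * I) by push_cast; ring,
      Complex.exp_int_mul_two_pi_mul_I]
    simp

noncomputable def torusMeasure (ι : Type*) [Fintype ι] : Measure (ι → ℝ) :=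
  Measure.pi fun _ => volume.restrict (Ioc 0 (2 * π))

section Torus

variable {ι : Type*} [Fintype ι]

instance : IsFiniteMeasure (torusMeasure ι) := by
  unfold torusMeasure; infer_instance

lemma torusMeasure_real_univ : (torusMeasure ι).real univ = (2 * π) ^ Fintype.card ι := by
  simp [torusMeasure, measureReal_def, Measure.pi_univ, Real.volume_Ioc, Real.pi_pos.le]

lemma integral_prod_exp_int_mul_I (β : ι → ℤ) :
    ∫ θ, ∏ i, cexp (β i * θ i * I) ∂torusMeasure ι =
      if β = 0 then (2 * π : ℂ) ^ Fintype.card ι else 0 := by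
  rw [torusMeasure, integral_fintype_prod_eq_prod (fun i (u : ℝ) => cexp (β i * u * I))]
  simp only [integral_exp_int_mul_I, Finset.prod_ite_zero, Finset.mem_univ, true_implies,
    Finset.prod_const, Finset.card_univ, funext_iff, Pi.zero_apply]

lemma integral_prod_pow_mul_exp (ρ : ι → ℝ) (α α₀ : ι → ℕ) :
    ∫ θ, (∏ i, (ρ i * cexp (θ i * I)) ^ α i) * ∏ i, cexp (-(α₀ i) * θ i * I) ∂torusMeasure ι =
      if α = α₀ then (∏ i, (ρ i : ℂ) ^ α₀ i) * (2 * π : ℂ) ^ Fintype.card ι else 0 := by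
  have hmonomial : ∀ θ : ι → ℝ,
      (∏ i, (ρ i * cexp (θ i * I)) ^ α i) * ∏ i, cexp (-(α₀ i) * θ i * I) =
        (∏ i, (ρ i : ℂ) ^ α i) * ∏ i, cexp (((α i - α₀ i : ℤ) : ℂ) * θ i * I) := by
    intro θ
    simp only [← Finset.prod_mul_distrib, mul_pow, ← Complex.exp_nat_mul, mul_assoc,
      ← Complex.exp_add]
    congr! 3
    push_cast; ring
  have hβ : (fun i => (α i - α₀ i : ℤ)) = 0 ↔ α = α₀ := by
    simp [funext_iff, sub_eq_zero]
  simp_rw [hmonomial, integral_const_mul, integral_prod_exp_int_mul_I, if_congr hβ rfl rfl]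
  split_ifs with h
  · rw [h]
  · rw [mul_zero]

lemma norm_ofReal_mul_exp_mul_I {ρ : ℝ} (hρ : 0 ≤ ρ) (θ : ℝ) : ‖(ρ : ℂ) * cexp (θ * I)‖ = ρ := by
  rw [norm_mul, Complex.norm_exp_ofReal_mul_I, Complex.norm_of_nonneg hρ, mul_one]

theorem norm_coeff_mul_prod_pow_le_of_norm_tsum_le {a : (ι → ℕ) → ℂ} {ρ : ι → ℝ} {C : ℝ}
    (hρ : ∀ i, 0 ≤ ρ i) (hs : Summable fun α => ‖a α‖ * ∏ i, ρ i ^ α i)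
    (hC : ∀ z : ι → ℂ, (∀ i, ‖z i‖ = ρ i) → ‖∑' α, a α * ∏ i, z i ^ α i‖ ≤ C) (α₀ : ι → ℕ) :
    ‖a α₀‖ * ∏ i, ρ i ^ α₀ i ≤ C := by
  set z : (ι → ℝ) → ι → ℂ := fun θ i => ρ i * cexp (θ i * I)
  have hz : ∀ θ i, ‖z θ i‖ = ρ i := fun θ i => norm_ofReal_mul_exp_mul_I (hρ i) (θ i)
  set w : (ι → ℝ) → ℂ := fun θ => ∏ i, cexp (-(α₀ i) * θ i * I)
  have hw : ∀ θ, ‖w θ‖ = 1 := fun θ => by simp [w, norm_prod, Complex.norm_exp]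
  set F : (ι → ℕ) → (ι → ℝ) → ℂ := fun α θ => a α * ((∏ i, z θ i ^ α i) * w θ)
  have hF_norm : ∀ α θ, ‖F α θ‖ = ‖a α‖ * ∏ i, ρ i ^ α i := fun α θ => by
    simp [F, norm_prod, hz, hw]
  have hF_integral : ∀ α, ∫ θ, F α θ ∂torusMeasure ι =
      if α = α₀ then a α₀ * ((∏ i, (ρ i : ℂ) ^ α₀ i) * (2 * π : ℂ) ^ Fintype.card ι) else 0 := by
    intro α
    rw [integral_const_mul, integral_prod_pow_mul_exp]
    split_ifs with h <;> simp [h]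
  have hF_integrable : ∀ α, Integrable (F α) (torusMeasure ι) := fun α =>
    Integrable.of_bound (by fun_prop) _ (ae_of_all _ fun θ => (hF_norm α θ).le)
  have hswap := integral_tsum_of_summable_integral_norm hF_integrable
    (by simpa [hF_norm] using hs.mul_left _)
  have hbound : ∀ θ, ‖∑' α, F α θ‖ ≤ C := fun θ => by
    simpa only [F, ← mul_assoc, tsum_mul_right, norm_mul, hw, mul_one] using hC (z θ) (hz θ)
  have := norm_integral_le_of_norm_le_const (μ := torusMeasure ι) (ae_of_all _ hbound)
  rw [← hswap, tsum_eq_single α₀ fun α hα => by rw [hF_integral, if_neg hα], hF_integral,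
    if_pos rfl, torusMeasure_real_univ] at this
  simp only [norm_mul, norm_prod, norm_pow, Complex.norm_of_nonneg (hρ _),
    Complex.norm_ofNat, Complex.norm_real, norm_of_nonneg pi_pos.le, ← mul_assoc] at this
  exact le_of_mul_le_mul_right this (by positivity)

end Torus

lemma prod_mul_exp_pow {ι : Type*} [Fintype ι] (r ξ : ι → ℝ) (t : ℝ) (α : ι → ℕ) :
    ∏ i, (r i * exp (t * ξ i)) ^ α i = (∏ i, r i ^ α i) * exp (t * ∑ i, (α i : ℝ) * ξ i) := by
  rw [Finset.mul_sum, exp_sum, ← Finset.prod_mul_distrib]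
  refine Finset.prod_congr rfl fun i _ => ?_
  rw [mul_pow, ← exp_nat_mul]
  ring_nf

lemma nonpos_of_forall_mul_exp_le {K C s : ℝ} (hs : 0 < s) (h : ∀ t ≥ 0, K * exp (t * s) ≤ C) :
    K ≤ 0 := by
  by_contra! hK
  have hlim : Tendsto (fun t => K * exp (t * s)) atTop atTop :=
    (tendsto_exp_atTop.comp (tendsto_id.atTop_mul_const hs)).const_mul_atTop hK
  obtain ⟨t, hCt, ht⟩ := ((hlim.eventually_gt_atTop C).and (eventually_ge_atTop 0)).exists
  exact (h t ht).not_gt hCt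

theorem coeff_vanishes_of_bounded_on_polycircles_general (n : ℕ)
    (Ω : Set (Fin n → ℂ))
    (a : (Fin n → ℕ) → ℂ) (f : (Fin n → ℂ) → ℂ)
    (hsum : ∀ z ∈ Ω, HasSum (fun α : Fin n → ℕ => a α * ∏ i, z i ^ α i) (f z))
    (ξ : Fin n → ℝ) (r : Fin n → ℝ) (hr : ∀ i, 0 < r i) (C : ℝ)
    (α₀ : Fin n → ℕ) (hα₀ : 0 < ∑ i, (α₀ i : ℝ) * ξ i)
    (hcirc : ∀ t : ℝ, 0 ≤ t →
      ∀ z : Fin n → ℂ, (∀ i, ‖z i‖ = r i * Real.exp (t * ξ i)) →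
        z ∈ Ω ∧ ‖f z‖ ≤ C) :
    a α₀ = 0 := by
  have hcauchy : ∀ t ≥ 0,
      (‖a α₀‖ * ∏ i, r i ^ α₀ i) * exp (t * ∑ i, (α₀ i : ℝ) * ξ i) ≤ C := by
    intro t ht
    have hρ : ∀ i, 0 ≤ r i * exp (t * ξ i) := fun i => by have := hr i; positivity
    have hρ_mem := hcirc t ht _ fun i => Complex.norm_of_nonneg (hρ i)
    have habs : Summable fun α => ‖a α‖ * ∏ i, (r i * exp (t * ξ i)) ^ α i := by
      simpa only [norm_mul, norm_prod, norm_pow, Complex.norm_of_nonneg (hρ _)] using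
        summable_norm_iff.mpr (hsum _ hρ_mem.1).summable
    rw [mul_assoc, ← prod_mul_exp_pow]
    refine norm_coeff_mul_prod_pow_le_of_norm_tsum_le hρ habs (fun z hz => ?_) α₀
    rw [(hsum z (hcirc t ht z hz).1).tsum_eq]
    exact (hcirc t ht z hz).2
  have hr_prod : 0 < ∏ i, r i ^ α₀ i := Finset.prod_pos fun i _ => pow_pos (hr i) _
  exact norm_le_zero_iff.mp <|
    nonpos_of_mul_nonpos_left (nonpos_of_forall_mul_exp_le hα₀ hcauchy) hr_prod

/-- If a power series converging on a Reinhardt domain Ω ∋ 0 has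
    its sum bounded by C on the polycircles C_t of polyradius (rⱼ e^{tξⱼ}) for
    all t ≥ 0, and ⟨α₀,ξ⟩ > 0, then the coefficient a_{α₀} vanishes. -/
theorem coeff_vanishes_of_bounded_on_polycircles (n : ℕ)
    (Ω : Set (Fin n → ℂ)) (hΩopen : IsOpen Ω) (hΩconn : IsConnected Ω)
    (hΩ0 : (0 : Fin n → ℂ) ∈ Ω)
    (hΩrein : ∀ z ∈ Ω, ∀ ζ : Fin n → ℂ, (∀ i, ‖ζ i‖ = 1) →
      (fun i => ζ i * z i) ∈ Ω)
    (a : (Fin n → ℕ) → ℂ) (f : (Fin n → ℂ) → ℂ)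
    (hsum : ∀ z ∈ Ω, HasSum (fun α : Fin n → ℕ => a α * ∏ i, z i ^ α i) (f z))
    (ξ : Fin n → ℝ) (r : Fin n → ℝ) (hr : ∀ i, 0 < r i) (C : ℝ)
    (α₀ : Fin n → ℕ) (hα₀ : 0 < ∑ i, (α₀ i : ℝ) * ξ i)
    (hcirc : ∀ t : ℝ, 0 ≤ t →
      ∀ z : Fin n → ℂ, (∀ i, ‖z i‖ = r i * Real.exp (t * ξ i)) →
        z ∈ Ω ∧ ‖f z‖ ≤ C) :
    a α₀ = 0 :=
  coeff_vanishes_of_bounded_on_polycircles_general n Ω a f hsum ξ r hr C α₀ hα₀ hcirc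
end

section
/- Let K ⊂ ℂⁿ be a nonempty compact Reinhardt set, S ⊂ ℝ₊ⁿ compact convex with 0 ∈ S, A = Log(K ∩ (ℂ*)ⁿ) nonempty, Γ = ℝ₊S, and assume K = closure(K ∩ (ℂ*)ⁿ). Then the S-hull satisfies K̂^S ∩ (ℂ*)ⁿ = Log^{−1}(Â_Γ), where Â_Γ = {x ∈ ℝⁿ : ⟨x,ξ⟩ ≤ φ_A(ξ) ∀ ξ ∈ Γ} = ch(A) − Γ°. -/
/-!
On `(ℂ*)ⁿ` both sides are cut out by the inequalities `‖z ^ ξ‖ ≤ max_K ‖w ^ ξ‖`, `ξ ∈ Γ`: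
since `K` is the closure of its part in `(ℂ*)ⁿ`, `φ_A(ξ) = log max_K ‖w ^ ξ‖`.
A point of the hull satisfies them for rational `ξ ∈ S` by testing the monomial `w ^ (mξ)`;
they pass to all of `S` because `(w, ξ) ↦ ‖w ^ ξ‖` is upper semicontinuous on `K × ℝ₊ⁿ` and
`K` is compact, and to `Γ` by homogeneity.
Conversely, Cauchy's inequalities on the Reinhardt set `K` bound every term of `p ^ k` at `z`
by `(max_K ‖p‖) ^ k`, and the number of terms grows polynomially in `k`, so taking `k`-th
roots gives `‖p z‖ ≤ max_K ‖p‖`.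
-/

open scoped BigOperators

noncomputable section

/-- Logarithmic coordinates Log z = (log|z₁|,…,log|zₙ|). -/
def LogC {n : ℕ} (z : Fin n → ℂ) : Fin n → ℝ := fun i => Real.log ‖z i‖

open Filter Topology

/-- `‖w ^ s‖` for a real exponent `s`, with `Real.rpow`'s convention `0 ^ 0 = 1`. -/
def normMonomial {n : ℕ} (s : Fin n → ℝ) (w : Fin n → ℂ) : ℝ := ∏ i, ‖w i‖ ^ s i

/-- The cone `Γ = ℝ₊S`. -/
def coneOf {E : Type*} [AddCommGroup E] [Module ℝ E] (S : Set E) : Set E :=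
  {ξ | ∃ t : ℝ, 0 ≤ t ∧ ∃ s ∈ S, ξ = t • s}

/-- `φ_A` in the paper's notation. -/
def supportFunction {n : ℕ} (A : Set (Fin n → ℝ)) (ξ : Fin n → ℝ) : ℝ :=
  sSup ((fun a => dotp a ξ) '' A)

/-- `(x, y) ↦ x ^ y` is upper semicontinuous on `[0, ∞)²`: its only discontinuity is at
`(0, 0)`, where nearby values are at most `1 = 0 ^ 0`. -/
lemma exists_tendsto_rpow_ge {α : Type*} {l : Filter α} [l.NeBot] {x y : α → ℝ} {x₀ y₀ : ℝ}
    (hx : Tendsto x l (𝓝 x₀)) (hy : Tendsto y l (𝓝 y₀)) (hx0 : ∀ a, 0 ≤ x a)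
    (hy0 : ∀ a, 0 ≤ y a) :
    ∃ u : α → ℝ, Tendsto u l (𝓝 (x₀ ^ y₀)) ∧ ∀ᶠ a in l, x a ^ y a ≤ u a := by
  by_cases h : x₀ ≠ 0 ∨ 0 < y₀
  · exact ⟨_, hx.rpow hy h, Eventually.of_forall fun _ => le_rfl⟩
  obtain ⟨rfl, rfl⟩ : x₀ = 0 ∧ y₀ = 0 := by
    push Not at h
    exact ⟨h.1, le_antisymm h.2 (ge_of_tendsto' hy hy0)⟩
  refine ⟨fun _ => 1, by rw [Real.rpow_zero]; exact tendsto_const_nhds, ?_⟩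
  filter_upwards [hx.eventually_lt_const zero_lt_one] with a ha
  exact Real.rpow_le_one (hx0 a) ha.le (hy0 a)

lemma exists_nat_smul_eq_natCast {ι : Type*} [Fintype ι] {s : ι → ℝ} (hs0 : ∀ i, 0 ≤ s i)
    (hsq : ∀ i, ∃ q : ℚ, s i = q) :
    ∃ m : ℕ, 0 < m ∧ ∃ α : ι → ℕ, (fun i => (α i : ℝ)) = (m : ℝ) • s := by
  choose q hq using hsq
  set m := ∏ i, (q i).den
  have hnat : ∀ i, ∃ a : ℕ, (a : ℝ) = m * s i := by
    intro i
    obtain ⟨d, hd⟩ : (q i).den ∣ m := Finset.dvd_prod_of_mem _ (Finset.mem_univ i)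
    obtain ⟨a, ha⟩ := Int.eq_ofNat_of_zero_le (Rat.num_nonneg.2 (by exact_mod_cast hq i ▸ hs0 i))
    refine ⟨d * a, ?_⟩
    have hQ : ((d * a : ℕ) : ℚ) = (m : ℚ) * q i := by
      rw [hd, Nat.cast_mul, Nat.cast_mul, mul_comm ((q i).den : ℚ), mul_assoc, Rat.den_mul_eq_num,
        ha]
      push_cast
      rfl
    rw [hq i]
    exact_mod_cast hQ
  choose α hα using hnat
  exact ⟨m, Finset.prod_pos fun i _ => (q i).pos, α, funext fun i => by simp [hα]⟩

lemma add_mem_coneOf {E : Type*} [AddCommGroup E] [Module ℝ E] {S : Set E} (hS : Convex ℝ S)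
    {x y : E} (hx : x ∈ coneOf S) (hy : y ∈ coneOf S) : x + y ∈ coneOf S := by
  obtain ⟨a, ha, s, hs, rfl⟩ := hx
  obtain ⟨b, hb, t, ht, rfl⟩ := hy
  rcases (add_nonneg ha hb).eq_or_lt with hab | hab
  · obtain ⟨rfl, rfl⟩ : a = 0 ∧ b = 0 := ⟨by linarith, by linarith⟩
    exact ⟨0, le_rfl, s, hs, by simp⟩
  refine ⟨a + b, hab.le, (a / (a + b)) • s + (b / (a + b)) • t,
    hS hs ht (by positivity) (by positivity) (by field_simp), ?_⟩
  rw [smul_add, smul_smul, smul_smul, mul_div_cancel₀ _ hab.ne', mul_div_cancel₀ _ hab.ne']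

lemma le_of_forall_pow_le_mul_pow {a M C : ℝ} (n : ℕ) (hM : 0 ≤ M)
    (h : ∀ k : ℕ, 1 ≤ k → a ^ k ≤ C * k ^ n * M ^ k) : a ≤ M := by
  by_contra! hMa
  have ha : 0 < a := hM.trans_lt hMa
  have hr : |M / a| < 1 := by
    rw [abs_of_nonneg (by positivity)]
    exact (div_lt_one ha).2 hMa
  have hlim : Tendsto (fun k : ℕ => C * ((k : ℝ) ^ n * (M / a) ^ k)) atTop (𝓝 (C * 0)) :=
    (tendsto_pow_const_mul_const_pow_of_abs_lt_one n hr).const_mul C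
  have hge : ∀ᶠ k : ℕ in atTop, 1 ≤ C * ((k : ℝ) ^ n * (M / a) ^ k) := by
    filter_upwards [eventually_ge_atTop 1] with k hk
    rw [div_pow, ← mul_div_assoc, ← mul_div_assoc, le_div_iff₀ (pow_pos ha k), one_mul, ← mul_assoc]
    exact h k hk
  have := ge_of_tendsto hlim hge
  norm_num at this

lemma IsPrimitiveRoot.sum_range_pow_mul_inv_pow {𝕜 : Type*} [Field 𝕜] {ζ : 𝕜} {N : ℕ}
    (hζ : IsPrimitiveRoot ζ N) {a b : ℕ} (ha : a < N) (hb : b < N) :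
    ∑ m ∈ Finset.range N, ζ ^ (m * a) * ζ⁻¹ ^ (m * b) = if a = b then (N : 𝕜) else 0 := by
  have hζ0 : ζ ≠ 0 := hζ.ne_zero (by omega)
  have hpow : ∀ m, ζ ^ (m * a) * ζ⁻¹ ^ (m * b) = (ζ ^ a * ζ⁻¹ ^ b) ^ m := fun m => by
    rw [mul_pow, ← pow_mul, ← pow_mul, mul_comm a, mul_comm b]
  simp_rw [hpow]
  split_ifs with hab
  · simp [hab, mul_inv_cancel₀ (pow_ne_zero b hζ0)]
  · have hx1 : ζ ^ a * ζ⁻¹ ^ b ≠ 1 := fun h => hab <| hζ.pow_inj ha hb <| by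
      rwa [inv_pow, mul_inv_eq_one₀ (pow_ne_zero b hζ0)] at h
    have hxN : (ζ ^ a * ζ⁻¹ ^ b) ^ N = 1 := by
      rw [mul_pow, ← pow_mul, ← pow_mul, mul_comm a, mul_comm b, pow_mul, pow_mul,
        hζ.pow_eq_one, one_pow, inv_pow, hζ.pow_eq_one, inv_one, one_pow, mul_one]
    rw [geom_sum_eq hx1, hxN, sub_self, zero_div]

lemma IsPrimitiveRoot.sum_piFinset_prod_pow_mul_inv_pow {𝕜 ι : Type*} [Field 𝕜] [Fintype ι]
    [DecidableEq ι] {ζ : 𝕜} {N : ℕ} (hζ : IsPrimitiveRoot ζ N) {a b : ι → ℕ}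
    (ha : ∀ i, a i < N) (hb : ∀ i, b i < N) :
    ∑ j ∈ Fintype.piFinset fun _ : ι => Finset.range N, ∏ i, ζ ^ (j i * a i) * ζ⁻¹ ^ (j i * b i) =
      if a = b then (N : 𝕜) ^ Fintype.card ι else 0 := by
  rw [← Finset.prod_univ_sum (fun _ => Finset.range N)
    (fun i m => ζ ^ (m * a i) * ζ⁻¹ ^ (m * b i))]
  simp_rw [hζ.sum_range_pow_mul_inv_pow (ha _) (hb _)]
  split_ifs with hab
  · simp [hab]
  · obtain ⟨i, hi⟩ := Function.ne_iff.1 hab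
    exact Finset.prod_eq_zero (Finset.mem_univ i) (if_neg hi)

lemma MvPolynomial.le_totalDegree_of_mem_support {σ R : Type*} [CommSemiring R]
    {Q : MvPolynomial σ R} {β : σ →₀ ℕ} (hβ : β ∈ Q.support) (i : σ) : β i ≤ Q.totalDegree :=
  (MvPolynomial.monomial_le_degreeOf i hβ).trans (MvPolynomial.degreeOf_le_totalDegree Q i)

lemma MvPolynomial.card_support_le {σ R : Type*} [Fintype σ] [CommSemiring R]
    (Q : MvPolynomial σ R) : Q.support.card ≤ (Q.totalDegree + 1) ^ Fintype.card σ := by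
  classical
  calc Q.support.card
      ≤ (Fintype.piFinset fun _ : σ => Finset.range (Q.totalDegree + 1)).card :=
        Finset.card_le_card_of_injOn (fun β => ⇑β)
          (fun β hβ => Fintype.mem_piFinset.2 fun i => Finset.mem_range.2
            (Nat.lt_succ_of_le (le_totalDegree_of_mem_support hβ i)))
          DFunLike.coe_injective.injOn
    _ = _ := by simp

lemma support_pow_subset_coneOf {σ R : Type*} [CommSemiring R] {S : Set (σ → ℝ)}
    (hS : Convex ℝ S) {P : MvPolynomial σ R} (hP : ∀ β ∈ P.support, (fun i => (β i : ℝ)) ∈ coneOf S)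
    {k : ℕ} (hk : 1 ≤ k) : ∀ β ∈ (P ^ k).support, (fun i => (β i : ℝ)) ∈ coneOf S := by
  classical
  induction k, hk using Nat.le_induction with
  | base => simpa using hP
  | succ k _ ih =>
    intro β hβ
    rw [pow_succ] at hβ
    obtain ⟨β₁, h₁, β₂, h₂, rfl⟩ := Finset.mem_add.1 (MvPolynomial.support_mul _ _ hβ)
    convert add_mem_coneOf hS (ih β₁ h₁) (hP β₂ h₂) using 1
    ext i
    simp

section

variable {n : ℕ} {S : Set (Fin n → ℝ)} {K : Set (Fin n → ℂ)}

lemma normMonomial_nonneg (s : Fin n → ℝ) (w : Fin n → ℂ) : 0 ≤ normMonomial s w :=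
  Finset.prod_nonneg fun _ _ => Real.rpow_nonneg (norm_nonneg _) _

lemma normMonomial_natCast (β : Fin n → ℕ) (w : Fin n → ℂ) :
    normMonomial (fun i => (β i : ℝ)) w = ‖∏ i, w i ^ β i‖ := by
  simp [normMonomial, norm_prod, Real.rpow_natCast]

lemma normMonomial_eq_exp_dotp {w : Fin n → ℂ} (hw : ∀ i, w i ≠ 0) (s : Fin n → ℝ) :
    normMonomial s w = Real.exp (dotp (LogC w) s) := by
  rw [normMonomial, dotp, Real.exp_sum]
  exact Finset.prod_congr rfl fun i _ => Real.rpow_def_of_pos (norm_pos_iff.2 (hw i)) _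

lemma normMonomial_smul (t : ℝ) (s : Fin n → ℝ) (w : Fin n → ℂ) :
    normMonomial (t • s) w = normMonomial s w ^ t := by
  rw [normMonomial, normMonomial,
    ← Real.finsetProd_rpow _ _ fun _ _ => Real.rpow_nonneg (norm_nonneg _) _]
  refine Finset.prod_congr rfl fun i _ => ?_
  rw [Pi.smul_apply, smul_eq_mul, mul_comm, Real.rpow_mul (norm_nonneg _)]

lemma continuous_normMonomial {s : Fin n → ℝ} (hs : ∀ i, 0 ≤ s i) :
    Continuous (normMonomial s) :=
  continuous_finsetProd _ fun i _ =>
    (continuous_apply i).norm.rpow_const fun _ => Or.inr (hs i)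

lemma continuous_normMonomial_exponent {w : Fin n → ℂ} (hw : ∀ i, w i ≠ 0) :
    Continuous fun s => normMonomial s w :=
  continuous_finsetProd _ fun i _ =>
    continuous_const.rpow (continuous_apply i) fun _ => Or.inl (norm_ne_zero_iff.2 (hw i))

lemma le_normMonomial_of_tendsto {α : Type*} {l : Filter α} [l.NeBot]
    {w : α → Fin n → ℂ} {s : α → Fin n → ℝ} {c : α → ℝ} {w₀ : Fin n → ℂ} {s₀ : Fin n → ℝ}
    {c₀ : ℝ} (hw : Tendsto w l (𝓝 w₀)) (hs : Tendsto s l (𝓝 s₀)) (hs0 : ∀ a i, 0 ≤ s a i)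
    (hc : Tendsto c l (𝓝 c₀)) (hle : ∀ᶠ a in l, c a ≤ normMonomial (s a) (w a)) :
    c₀ ≤ normMonomial s₀ w₀ := by
  choose u hu hle_u using fun i => exists_tendsto_rpow_ge
    (((continuous_apply i).norm.tendsto w₀).comp hw) (((continuous_apply i).tendsto s₀).comp hs)
    (fun _ => norm_nonneg _) (fun a => hs0 a i)
  refine le_of_tendsto_of_tendsto hc (tendsto_finsetProd _ fun i _ => hu i) ?_
  filter_upwards [hle, eventually_all.2 hle_u] with a ha hau
  exact ha.trans (Finset.prod_le_prod (fun _ _ => Real.rpow_nonneg (norm_nonneg _) _)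
    fun i _ => hau i)

lemma exists_normMonomial_le_smul {z : Fin n → ℂ} {s : Fin n → ℝ}
    (h : ∃ w ∈ K, normMonomial s z ≤ normMonomial s w) {t : ℝ} (ht : 0 ≤ t) :
    ∃ w ∈ K, normMonomial (t • s) z ≤ normMonomial (t • s) w := by
  obtain ⟨w, hwK, hzw⟩ := h
  refine ⟨w, hwK, ?_⟩
  rw [normMonomial_smul, normMonomial_smul]
  exact Real.rpow_le_rpow (normMonomial_nonneg _ _) hzw ht

lemma isClosed_setOf_exists_normMonomial_le (hK : IsCompact K) {z : Fin n → ℂ} (hz : ∀ i, z i ≠ 0) :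
    IsClosed {s | (∀ i, 0 ≤ s i) ∧ ∃ w ∈ K, normMonomial s z ≤ normMonomial s w} := by
  refine IsSeqClosed.isClosed fun s s₀ hs hlim => ?_
  choose hs0 w hwK hle using hs
  obtain ⟨w₀, hw₀K, φ, hφ, hwφ⟩ := hK.tendsto_subseq hwK
  have hsφ : Tendsto (s ∘ φ) atTop (𝓝 s₀) := hlim.comp hφ.tendsto_atTop
  refine ⟨fun i => ge_of_tendsto' (((continuous_apply i).tendsto s₀).comp hlim) fun k => hs0 k i,
    w₀, hw₀K, le_normMonomial_of_tendsto hwφ hsφ (fun k => hs0 (φ k)) ?_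
      (Eventually.of_forall fun k => hle (φ k))⟩
  exact ((continuous_normMonomial_exponent hz).tendsto s₀).comp hsφ

lemma exists_normMonomial_le_of_mem_hullS_of_rat (hK : IsCompact K) (hKne : K.Nonempty)
    {z : Fin n → ℂ} (hzK : z ∈ hullS S K) {s : Fin n → ℝ} (hsS : s ∈ S) (hs0 : ∀ i, 0 ≤ s i)
    (hsq : ∀ i, ∃ q : ℚ, s i = q) : ∃ w ∈ K, normMonomial s z ≤ normMonomial s w := by
  obtain ⟨m, hm, α, hα⟩ := exists_nat_smul_eq_natCast hs0 hsq
  have hpoly : IsPolyS S fun w => ∏ i, w i ^ α i :=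
    ⟨m, Finsupp.single α 1, fun α' hα' => by
      obtain rfl := Finset.mem_singleton.1 (Finsupp.support_single_subset hα')
      exact ⟨s, hsS, hα⟩, by simp⟩
  have hcont : Continuous fun w : Fin n → ℂ => ‖∏ i, w i ^ α i‖ := by fun_prop
  obtain ⟨w, hwK, hw⟩ := hK.exists_sSup_image_eq hKne hcont.continuousOn
  refine ⟨w, hwK, ?_⟩
  have hzw := hw ▸ hzK _ hpoly
  rwa [← normMonomial_natCast, ← normMonomial_natCast, hα, normMonomial_smul, normMonomial_smul,
    Real.rpow_le_rpow_iff (normMonomial_nonneg _ _) (normMonomial_nonneg _ _)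
      (by exact_mod_cast hm)] at hzw

lemma exists_normMonomial_le_of_mem_hullS
    (hSpos : ∀ s ∈ S, ∀ i, 0 ≤ s i) (hSrat : S = closure {s ∈ S | ∀ i, ∃ q : ℚ, s i = (q : ℝ)})
    (hK : IsCompact K) (hKne : K.Nonempty) {z : Fin n → ℂ}
    (hzK : z ∈ hullS S K) (hz : ∀ i, z i ≠ 0) {ξ : Fin n → ℝ} (hξ : ξ ∈ coneOf S) :
    ∃ w ∈ K, normMonomial ξ z ≤ normMonomial ξ w := by
  obtain ⟨t, ht, s, hs, rfl⟩ := hξ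
  refine exists_normMonomial_le_smul ?_ ht
  have hrat : {s ∈ S | ∀ i, ∃ q : ℚ, s i = (q : ℝ)} ⊆
      {s | (∀ i, 0 ≤ s i) ∧ ∃ w ∈ K, normMonomial s z ≤ normMonomial s w} := fun s hs =>
    ⟨hSpos s hs.1, exists_normMonomial_le_of_mem_hullS_of_rat hK hKne hzK hs.1 (hSpos s hs.1) hs.2⟩
  rw [hSrat] at hs
  exact (closure_minimal hrat (isClosed_setOf_exists_normMonomial_le hK hz) hs).2

lemma exp_supportFunction_logC_eq (hKcl : K = closure (K ∩ {w | ∀ i, w i ≠ 0}))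
    (hKs : (K ∩ {w | ∀ i, w i ≠ 0}).Nonempty) {s : Fin n → ℝ} (hs0 : ∀ i, 0 ≤ s i)
    {w₀ : Fin n → ℂ} (hw₀ : w₀ ∈ K) (hmax : ∀ w ∈ K, normMonomial s w ≤ normMonomial s w₀) :
    Real.exp (supportFunction (LogC '' (K ∩ {w | ∀ i, w i ≠ 0})) s) = normMonomial s w₀ := by
  have ⟨w₁, hw₁K, hw₁⟩ := hKs
  have hpos : 0 < normMonomial s w₀ :=
    ((normMonomial_eq_exp_dotp hw₁ s).symm ▸ Real.exp_pos _).trans_le (hmax w₁ hw₁K)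
  have hle : ∀ w ∈ K ∩ {w | ∀ i, w i ≠ 0}, dotp (LogC w) s ≤ Real.log (normMonomial s w₀) :=
    fun w hw => by
      rw [Real.le_log_iff_exp_le hpos, ← normMonomial_eq_exp_dotp hw.2]
      exact hmax w hw.1
  have hbdd : BddAbove ((fun a => dotp a s) '' (LogC '' (K ∩ {w | ∀ i, w i ≠ 0}))) := by
    refine ⟨Real.log (normMonomial s w₀), ?_⟩
    rintro _ ⟨_, ⟨w, hw, rfl⟩, rfl⟩
    exact hle w hw
  refine le_antisymm ?_ ?_
  · rw [← Real.exp_log hpos, Real.exp_le_exp, supportFunction]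
    refine csSup_le ((hKs.image _).image _) ?_
    rintro _ ⟨_, ⟨w, hw, rfl⟩, rfl⟩
    exact hle w hw
  · have hKs_le : K ∩ {w | ∀ i, w i ≠ 0} ⊆ {w | normMonomial s w ≤
        Real.exp (supportFunction (LogC '' (K ∩ {w | ∀ i, w i ≠ 0})) s)} := fun w hw => by
      rw [Set.mem_ofPred_eq, normMonomial_eq_exp_dotp hw.2, Real.exp_le_exp]
      exact le_csSup hbdd ⟨_, ⟨w, hw, rfl⟩, rfl⟩
    rw [hKcl] at hw₀
    exact closure_minimal hKs_le (isClosed_le (continuous_normMonomial hs0) continuous_const) hw₀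

lemma dotp_logC_le_supportFunction_iff (hK : IsCompact K)
    (hKcl : K = closure (K ∩ {w | ∀ i, w i ≠ 0})) (hKs : (K ∩ {w | ∀ i, w i ≠ 0}).Nonempty)
    {s : Fin n → ℝ} (hs0 : ∀ i, 0 ≤ s i) {z : Fin n → ℂ} (hz : ∀ i, z i ≠ 0) :
    dotp (LogC z) s ≤ supportFunction (LogC '' (K ∩ {w | ∀ i, w i ≠ 0})) s ↔
      ∃ w ∈ K, normMonomial s z ≤ normMonomial s w := by
  obtain ⟨w₀, hw₀, -, hmax⟩ := hK.exists_sSup_image_eq_and_ge (hKs.mono Set.inter_subset_left)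
    (continuous_normMonomial hs0).continuousOn
  rw [← Real.exp_le_exp, exp_supportFunction_logC_eq hKcl hKs hs0 hw₀ hmax,
    ← normMonomial_eq_exp_dotp hz]
  exact ⟨fun h => ⟨w₀, hw₀, h⟩, fun ⟨w, hw, h⟩ => h.trans (hmax w hw)⟩

lemma IsPolyS.exists_mvPolynomial {p : (Fin n → ℂ) → ℂ} (hp : IsPolyS S p) :
    ∃ P : MvPolynomial (Fin n) ℂ, (∀ z, p z = MvPolynomial.eval z P) ∧
      ∀ β ∈ P.support, (fun i => (β i : ℝ)) ∈ coneOf S := by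
  classical
  obtain ⟨m, c, hc, rfl⟩ := hp
  refine ⟨∑ α ∈ c.support, MvPolynomial.monomial (Finsupp.equivFunOnFinite.symm α) (c α),
    fun z => ?_, fun β hβ => ?_⟩
  · simp [MvPolynomial.eval_monomial, Finsupp.prod_fintype]
  · obtain ⟨α, hα, hβα⟩ := Finset.mem_biUnion.1 (MvPolynomial.support_sum hβ)
    obtain rfl := Finset.mem_singleton.1 (MvPolynomial.support_monomial_subset hβα)
    obtain ⟨s, hs, hαs⟩ := hc α hα
    exact ⟨m, m.cast_nonneg, s, hs, by simpa using hαs⟩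

lemma MvPolynomial.sum_eval_rotate_mul_eq {N : ℕ} {ζ : ℂ} (hζ : IsPrimitiveRoot ζ N)
    (Q : MvPolynomial (Fin n) ℂ) (hQ : Q.totalDegree < N) (w : Fin n → ℂ) {β : Fin n →₀ ℕ}
    (hβ : ∀ i, β i < N) :
    ∑ j ∈ Fintype.piFinset fun _ : Fin n => Finset.range N,
        MvPolynomial.eval (fun i => ζ ^ j i * w i) Q * ∏ i, ζ⁻¹ ^ (j i * β i) =
      (N : ℂ) ^ n * (Q.coeff β * ∏ i, w i ^ β i) := by
  have hterm : ∀ j : Fin n → ℕ, ∀ γ : Fin n →₀ ℕ,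
      Q.coeff γ * (∏ i, (ζ ^ j i * w i) ^ γ i) * ∏ i, ζ⁻¹ ^ (j i * β i) =
        Q.coeff γ * (∏ i, w i ^ γ i) * ∏ i, ζ ^ (j i * γ i) * ζ⁻¹ ^ (j i * β i) := by
    intro j γ
    simp only [mul_pow, ← pow_mul, Finset.prod_mul_distrib]
    ring
  simp_rw [MvPolynomial.eval_eq', Finset.sum_mul, hterm]
  rw [Finset.sum_comm]
  simp_rw [← Finset.mul_sum]
  rw [Finset.sum_congr rfl fun γ hγ => by
    rw [hζ.sum_piFinset_prod_pow_mul_inv_pow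
      (fun i => (le_totalDegree_of_mem_support hγ i).trans_lt hQ) hβ]]
  simp_rw [DFunLike.coe_fn_eq, mul_ite, mul_zero, Finset.sum_ite_eq', Fintype.card_fin]
  split_ifs with hβQ
  · ring
  · rw [MvPolynomial.notMem_support_iff.1 hβQ]
    ring

/-- Cauchy's inequality on a Reinhardt set: average the rotations of `w` by `N`-th roots of
unity, `N > deg Q`, against the character `ζ^(-⟨j, β⟩)`. -/
lemma MvPolynomial.norm_coeff_mul_le
    (hKrein : ∀ z ∈ K, ∀ ζ : Fin n → ℂ, (∀ i, ‖ζ i‖ = 1) → (fun i => ζ i * z i) ∈ K)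
    (Q : MvPolynomial (Fin n) ℂ) {M : ℝ} (hM : ∀ v ∈ K, ‖MvPolynomial.eval v Q‖ ≤ M)
    {w : Fin n → ℂ} (hw : w ∈ K) (β : Fin n →₀ ℕ) :
    ‖Q.coeff β‖ * ‖∏ i, w i ^ β i‖ ≤ M := by
  by_cases hβ : β ∈ Q.support
  swap
  · rw [MvPolynomial.notMem_support_iff.1 hβ, norm_zero, zero_mul]
    exact (norm_nonneg _).trans (hM w hw)
  set N := Q.totalDegree + 1
  have hN : N ≠ 0 := Nat.succ_ne_zero _
  have hζ := Complex.isPrimitiveRoot_exp N hN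
  set ζ := Complex.exp (2 * Real.pi * Complex.I / N)
  have hζ1 : ‖ζ‖ = 1 := Complex.norm_eq_one_of_pow_eq_one hζ.pow_eq_one hN
  have hrot : ∀ j : Fin n → ℕ, ‖MvPolynomial.eval (fun i => ζ ^ j i * w i) Q *
      ∏ i, ζ⁻¹ ^ (j i * β i)‖ ≤ M := fun j => by
    simpa [norm_prod, hζ1] using hM _ (hKrein w hw (fun i => ζ ^ j i) fun i => by simp [hζ1])
  have hsum := MvPolynomial.sum_eval_rotate_mul_eq hζ Q (Nat.lt_succ_self _) w
    (fun i => Nat.lt_succ_of_le (le_totalDegree_of_mem_support hβ i))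
  have hbound : (N : ℝ) ^ n * (‖Q.coeff β‖ * ‖∏ i, w i ^ β i‖) ≤ (N : ℝ) ^ n * M := by
    calc (N : ℝ) ^ n * (‖Q.coeff β‖ * ‖∏ i, w i ^ β i‖)
        = ‖∑ j ∈ Fintype.piFinset fun _ : Fin n => Finset.range N,
            MvPolynomial.eval (fun i => ζ ^ j i * w i) Q * ∏ i, ζ⁻¹ ^ (j i * β i)‖ := by
          rw [hsum, norm_mul, norm_mul, norm_pow, Complex.norm_natCast]
      _ ≤ ∑ j ∈ Fintype.piFinset fun _ : Fin n => Finset.range N, M :=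
          (norm_sum_le _ _).trans (Finset.sum_le_sum fun j _ => hrot j)
      _ = (N : ℝ) ^ n * M := by simp
  exact le_of_mul_le_mul_left hbound (by positivity)

lemma mem_hullS_of_forall_exists_normMonomial_le (hSconv : Convex ℝ S) (hK : IsCompact K)
    (hKrein : ∀ z ∈ K, ∀ ζ : Fin n → ℂ, (∀ i, ‖ζ i‖ = 1) → (fun i => ζ i * z i) ∈ K)
    {z : Fin n → ℂ} (hz : ∀ ξ ∈ coneOf S, ∃ w ∈ K, normMonomial ξ z ≤ normMonomial ξ w) :
    z ∈ hullS S K := by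
  intro p hp
  obtain ⟨P, hPeval, hPcone⟩ := hp.exists_mvPolynomial
  set M := sSup ((fun w => ‖p w‖) '' K)
  have hpcont : Continuous p := by
    rw [funext hPeval]
    exact MvPolynomial.continuous_eval P
  have hpM : ∀ v ∈ K, ‖p v‖ ≤ M := fun v hv =>
    le_csSup (hK.bddAbove_image hpcont.norm.continuousOn) (Set.mem_image_of_mem _ hv)
  have hM : 0 ≤ M := Real.sSup_nonneg (by rintro _ ⟨w, -, rfl⟩; exact norm_nonneg _)
  -- `‖p z‖ ^ k ≤ #supp (P ^ k) * M ^ k`, and `#supp (P ^ k)` grows polynomially in `k`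
  refine le_of_forall_pow_le_mul_pow (C := ((P.totalDegree + 1 : ℕ) : ℝ) ^ n) n hM
    fun k hk => ?_
  have hterm : ∀ β ∈ (P ^ k).support, ‖(P ^ k).coeff β * ∏ i, z i ^ β i‖ ≤ M ^ k := by
    intro β hβ
    obtain ⟨w, hwK, hzw⟩ := hz _ (support_pow_subset_coneOf hSconv hPcone hk β hβ)
    rw [normMonomial_natCast, normMonomial_natCast] at hzw
    rw [norm_mul]
    refine (mul_le_mul_of_nonneg_left hzw (norm_nonneg _)).trans
      (MvPolynomial.norm_coeff_mul_le hKrein (P ^ k) (fun v hv => ?_) hwK β)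
    rw [map_pow, ← hPeval, norm_pow]
    exact pow_le_pow_left₀ (norm_nonneg _) (hpM v hv) k
  have hcard : ((P ^ k).support.card : ℝ) ≤ ((P.totalDegree + 1 : ℕ) : ℝ) ^ n * k ^ n := by
    rw [← mul_pow]
    have hdeg := MvPolynomial.totalDegree_pow P k
    have := (P ^ k).card_support_le
    rw [Fintype.card_fin] at this
    exact_mod_cast this.trans (Nat.pow_le_pow_left (by nlinarith) n)
  calc ‖p z‖ ^ k = ‖MvPolynomial.eval z (P ^ k)‖ := by rw [map_pow, hPeval, norm_pow]
    _ ≤ ∑ β ∈ (P ^ k).support, ‖(P ^ k).coeff β * ∏ i, z i ^ β i‖ := by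
        rw [MvPolynomial.eval_eq']
        exact norm_sum_le _ _
    _ ≤ (P ^ k).support.card * M ^ k := by
        simpa using Finset.sum_le_sum hterm
    _ ≤ ((P.totalDegree + 1 : ℕ) : ℝ) ^ n * k ^ n * M ^ k :=
        mul_le_mul_of_nonneg_right hcard (by positivity)

end

theorem hull_reinhardt_eq_logPreimage_general (n : ℕ) (S : Set (Fin n → ℝ))
    (hSconv : Convex ℝ S)
    (hSpos : ∀ s ∈ S, ∀ i, 0 ≤ s i)
    (hSrat : S = closure {s ∈ S | ∀ i, ∃ q : ℚ, s i = (q : ℝ)})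
    (K : Set (Fin n → ℂ)) (hK : IsCompact K)
    (hKrein : ∀ z ∈ K, ∀ ζ : Fin n → ℂ, (∀ i, ‖ζ i‖ = 1) →
      (fun i => ζ i * z i) ∈ K)
    (hKstar : (K ∩ {z | ∀ i, z i ≠ 0}).Nonempty)
    (hKcl : K = closure (K ∩ {z | ∀ i, z i ≠ 0})) :
    hullS S K ∩ {z | ∀ i, z i ≠ 0} =
      {z : Fin n → ℂ | (∀ i, z i ≠ 0) ∧
        ∀ ξ : Fin n → ℝ, (∃ t : ℝ, 0 ≤ t ∧ ∃ s ∈ S, ξ = t • s) →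
          dotp (LogC z) ξ ≤
            sSup ((fun a => dotp a ξ) '' (LogC '' (K ∩ {w | ∀ i, w i ≠ 0})))} := by
  have hcone_nonneg : ∀ ξ ∈ coneOf S, ∀ i, 0 ≤ ξ i := by
    rintro _ ⟨t, ht, s, hs, rfl⟩ i
    exact mul_nonneg ht (hSpos s hs i)
  have hiff : ∀ z : Fin n → ℂ, (∀ i, z i ≠ 0) → ∀ ξ ∈ coneOf S,
      dotp (LogC z) ξ ≤ supportFunction (LogC '' (K ∩ {w | ∀ i, w i ≠ 0})) ξ ↔
        ∃ w ∈ K, normMonomial ξ z ≤ normMonomial ξ w := fun z hz ξ hξ =>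
    dotp_logC_le_supportFunction_iff hK hKcl hKstar (hcone_nonneg ξ hξ) hz
  ext z
  constructor
  · rintro ⟨hzK, hz⟩
    exact ⟨hz, fun ξ hξ => (hiff z hz ξ hξ).2 <| exists_normMonomial_le_of_mem_hullS hSpos hSrat hK
      (hKstar.mono Set.inter_subset_left) hzK hz hξ⟩
  · rintro ⟨hz, hineq⟩
    exact ⟨mem_hullS_of_forall_exists_normMonomial_le hSconv hK hKrein fun ξ hξ =>
      (hiff z hz ξ hξ).1 (hineq ξ hξ), hz⟩

/-- For a compact Reinhardt set K with K = closure(K ∩ (ℂ*)ⁿ),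
    A = Log(K ∩ (ℂ*)ⁿ) nonempty and Γ = ℝ₊S, we have
    K̂^S ∩ (ℂ*)ⁿ = Log⁻¹(Â_Γ), where Â_Γ = {x : ⟨x,ξ⟩ ≤ φ_A(ξ) ∀ ξ ∈ Γ}. -/
theorem hull_reinhardt_eq_logPreimage (n : ℕ) (S : Set (Fin n → ℝ))
    (hScomp : IsCompact S) (hSconv : Convex ℝ S) (hS0 : (0 : Fin n → ℝ) ∈ S)
    (hSpos : ∀ s ∈ S, ∀ i, 0 ≤ s i)
    (hSrat : S = closure {s ∈ S | ∀ i, ∃ q : ℚ, s i = (q : ℝ)})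
    (K : Set (Fin n → ℂ)) (hK : IsCompact K) (hKne : K.Nonempty)
    (hKrein : ∀ z ∈ K, ∀ ζ : Fin n → ℂ, (∀ i, ‖ζ i‖ = 1) →
      (fun i => ζ i * z i) ∈ K)
    (hKstar : (K ∩ {z | ∀ i, z i ≠ 0}).Nonempty)
    (hKcl : K = closure (K ∩ {z | ∀ i, z i ≠ 0})) :
    hullS S K ∩ {z | ∀ i, z i ≠ 0} =
      {z : Fin n → ℂ | (∀ i, z i ≠ 0) ∧
        ∀ ξ : Fin n → ℝ, (∃ t : ℝ, 0 ≤ t ∧ ∃ s ∈ S, ξ = t • s) →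
          dotp (LogC z) ξ ≤
            sSup ((fun a => dotp a ξ) '' (LogC '' (K ∩ {w | ∀ i, w i ≠ 0})))} :=
  hull_reinhardt_eq_logPreimage_general n S hSconv hSpos hSrat K hK hKrein hKstar hKcl
end
end
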